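/- arXiv:1910.05753 — 2 statements merged into one kernel-verified Lean document; each statement's English description precedes it below -/
import Mathlib

section
/- Let Γ be a numerical semigroup minimally generated by v₀ < v₁ < v₂. Let k₀ be the least positive integer such that k₀v₀ = m₀v₁ + m₁v₂ admits a solution m₀, m₁ ∈ ℕ, and fix such a solution (m₀,m₁); let k₁ be the least positive integer such that k₁v₁ = n₀v₀ + n₁v₂ admits a solution n₀, n₁ ∈ ℕ, with a fixed solution (n₀,n₁); and let k₂ be the least positive integer such that k₂v₂ = p₀v₀ + p₁v₁ admits a solution p₀, p₁ ∈ ℕ, with a fixed solution (p₀,p₁). Then in ℂ[X,Y,Z], graded with weights v₀, v₁, v₂ on X, Y, Z, the ideal generated by all weighted-homogeneous polynomials f with f(1,1,1) = 0 equals the ideal generated by the three binomials X^{k₀} − Y^{m₀}Z^{m₁}, Y^{k₁} − X^{n₀}Z^{n₁}, and Z^{k₂} − X^{p₀}Y^{p₁}. -/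
noncomputable section

/-- `f ∈ ℂ[[t]]` has order exactly `n`: the coefficient of `t^n` is nonzero and all
lower coefficients vanish. -/
def HasOrder (f : PowerSeries ℂ) (n : ℕ) : Prop :=
  PowerSeries.coeff (R := ℂ) n f ≠ 0 ∧ ∀ m < n, PowerSeries.coeff (R := ℂ) m f = 0

/-- The semigroup of orders of (nonzero) elements of a set `S ⊆ ℂ[[t]]`. -/
def sgp (S : Set (PowerSeries ℂ)) : Set ℕ :=
  {n | ∃ f ∈ S, HasOrder f n}

/-- A `ℂ`-subalgebra `R ⊆ ℂ[[t]]` is closed if every `f` which is approximated to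
arbitrary order by elements of `R` lies in `R`. -/
def IsClosedSubalg (R : Subalgebra ℂ (PowerSeries ℂ)) : Prop :=
  ∀ f : PowerSeries ℂ,
    (∀ N : ℕ, ∃ g ∈ R, ∀ m < N, PowerSeries.coeff (R := ℂ) m (f - g) = 0) → f ∈ R

/-- The set `⟨x₀,…,x_{k-1}⟩ + t^c·ℂ[[t]] = {p(x₀,…,x_{k-1}) + h}`. -/
def adjSet {k : ℕ} (x : Fin k → PowerSeries ℂ) (c : ℕ) : Set (PowerSeries ℂ) :=
  {f | ∃ (p : MvPolynomial (Fin k) ℂ) (h : PowerSeries ℂ),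
    f = MvPolynomial.aeval x p + (PowerSeries.X : PowerSeries ℂ) ^ c * h}

/-- `c` is the conductor of `Γ`: the least natural number such that all `n ≥ c` lie in `Γ`. -/
def IsConductor (Γ : AddSubmonoid ℕ) (c : ℕ) : Prop :=
  (∀ n, c ≤ n → n ∈ Γ) ∧ ∀ c' < c, ∃ n, c' ≤ n ∧ n ∉ Γ

/-- `v 0 < v 1 < ⋯` minimally generates `Γ`. -/
def MinGen (Γ : AddSubmonoid ℕ) {k : ℕ} (v : Fin k → ℕ) : Prop :=
  StrictMono v ∧ AddSubmonoid.closure (Set.range v) = Γ ∧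
    ∀ s : Set ℕ, s ⊂ Set.range v → AddSubmonoid.closure s ≠ Γ

/-- `(x 0, …, x (k-1))` is in normal form with respect to `Γ` (with generators `v`):
the coefficient of `t^(v i)` in `x i` is `1`, and every other nonzero coefficient occurs
at an exponent which is a gap of `Γ` greater than `v i`. -/
def NormalFormT (Γ : AddSubmonoid ℕ) {k : ℕ} (v : Fin k → ℕ)
    (x : Fin k → PowerSeries ℂ) : Prop :=
  ∀ i, PowerSeries.coeff (R := ℂ) (v i) (x i) = 1 ∧
    ∀ m, m ≠ v i → PowerSeries.coeff (R := ℂ) m (x i) ≠ 0 → m ∉ Γ ∧ v i < m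

open MvPolynomial

namespace Stmt6Aux

/-- the monomial X^a Y^b Z^c -/
noncomputable def mon (a b c : ℕ) : MvPolynomial (Fin 3) ℂ := X 0 ^ a * X 1 ^ b * X 2 ^ c

/-- congruence of monomials modulo an ideal -/
def Cong (J : Ideal (MvPolynomial (Fin 3) ℂ)) (a b c a' b' c' : ℕ) : Prop :=
  mon a b c - mon a' b' c' ∈ J

variable {J : Ideal (MvPolynomial (Fin 3) ℂ)}

lemma cong_refl (a b c : ℕ) : Cong J a b c a b c := by
  simp [Cong]

lemma cong_symm {a b c a' b' c' : ℕ} (h : Cong J a b c a' b' c') :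
    Cong J a' b' c' a b c := by
  have := J.neg_mem h
  simpa [Cong] using this

lemma cong_trans {a b c a' b' c' a'' b'' c'' : ℕ}
    (h : Cong J a b c a' b' c') (h' : Cong J a' b' c' a'' b'' c'') :
    Cong J a b c a'' b'' c'' := by
  have := J.add_mem h h'
  simpa [Cong] using this

lemma cong_mul {a b c a' b' c' : ℕ} (s t u : ℕ) (h : Cong J a b c a' b' c') :
    Cong J (a + s) (b + t) (c + u) (a' + s) (b' + t) (c' + u) := by
  have := J.mul_mem_left (mon s t u) h
  have e : mon s t u * (mon a b c - mon a' b' c') =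
      mon (a + s) (b + t) (c + u) - mon (a' + s) (b' + t) (c' + u) := by
    simp only [mon, pow_add]; ring
  rwa [e] at this

section steps
variable {k₀ m₀ m₁ k₁ n₀ n₁ k₂ p₀ p₁ : ℕ}

lemma step0 (hB₀ : X 0 ^ k₀ - X 1 ^ m₀ * X 2 ^ m₁ ∈ J) (e b c : ℕ) :
    Cong J (k₀ + e) b c e (b + m₀) (c + m₁) := by
  have key : mon (k₀ + e) b c - mon e (b + m₀) (c + m₁) =
      mon e b c * (X 0 ^ k₀ - X 1 ^ m₀ * X 2 ^ m₁) := by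
    simp only [mon, pow_add]; ring
  rw [Cong, key]
  exact J.mul_mem_left _ hB₀

lemma step1 (hB₁ : X 1 ^ k₁ - X 0 ^ n₀ * X 2 ^ n₁ ∈ J) (a e c : ℕ) :
    Cong J a (k₁ + e) c (a + n₀) e (c + n₁) := by
  have key : mon a (k₁ + e) c - mon (a + n₀) e (c + n₁) =
      mon a e c * (X 1 ^ k₁ - X 0 ^ n₀ * X 2 ^ n₁) := by
    simp only [mon, pow_add]; ring
  rw [Cong, key]
  exact J.mul_mem_left _ hB₁

lemma step2 (hB₂ : X 2 ^ k₂ - X 0 ^ p₀ * X 1 ^ p₁ ∈ J) (a b e : ℕ) :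
    Cong J a b (k₂ + e) (a + p₀) (b + p₁) e := by
  have key : mon a b (k₂ + e) - mon (a + p₀) (b + p₁) e =
      mon a b e * (X 2 ^ k₂ - X 0 ^ p₀ * X 1 ^ p₁) := by
    simp only [mon, pow_add]; ring
  rw [Cong, key]
  exact J.mul_mem_left _ hB₂

end steps


/-- All hypotheses needed for the key congruence lemma. -/
structure Setup (v₀ v₁ v₂ : ℕ) (J : Ideal (MvPolynomial (Fin 3) ℂ)) where
  k₀ : ℕ
  m₀ : ℕ
  m₁ : ℕ
  k₁ : ℕ
  n₀ : ℕ
  n₁ : ℕ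
  k₂ : ℕ
  p₀ : ℕ
  p₁ : ℕ
  hv₀ : 0 < v₀
  hv₁ : 0 < v₁
  hv₂ : 0 < v₂
  hk₀pos : 0 < k₀
  hk₀ : k₀ * v₀ = m₀ * v₁ + m₁ * v₂
  hk₀min : ∀ k : ℕ, 0 < k → k < k₀ → ¬∃ m m' : ℕ, k * v₀ = m * v₁ + m' * v₂
  hk₁pos : 0 < k₁
  hk₁ : k₁ * v₁ = n₀ * v₀ + n₁ * v₂
  hk₁min : ∀ k : ℕ, 0 < k → k < k₁ → ¬∃ n n' : ℕ, k * v₁ = n * v₀ + n' * v₂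
  hk₂pos : 0 < k₂
  hk₂ : k₂ * v₂ = p₀ * v₀ + p₁ * v₁
  hk₂min : ∀ k : ℕ, 0 < k → k < k₂ → ¬∃ p p' : ℕ, k * v₂ = p * v₀ + p' * v₁
  hB₀ : X 0 ^ k₀ - X 1 ^ m₀ * X 2 ^ m₁ ∈ J
  hB₁ : X 1 ^ k₁ - X 0 ^ n₀ * X 2 ^ n₁ ∈ J
  hB₂ : X 2 ^ k₂ - X 0 ^ p₀ * X 1 ^ p₁ ∈ J

/-- All pairs of monomials of weighted degree `d` are congruent mod `J`. -/
def KeyP (v₀ v₁ v₂ : ℕ) (J : Ideal (MvPolynomial (Fin 3) ℂ)) (d : ℕ) : Prop :=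
  ∀ a b c a' b' c' : ℕ, a * v₀ + b * v₁ + c * v₂ = d →
    a' * v₀ + b' * v₁ + c' * v₂ = d → Cong J a b c a' b' c'

section share

variable {v₀ v₁ v₂ d : ℕ} {J : Ideal (MvPolynomial (Fin 3) ℂ)}

lemma share0 (S : Setup v₀ v₁ v₂ J) (IH : ∀ d' < d, KeyP v₀ v₁ v₂ J d') {a b c a' b' c' : ℕ} (ha : 0 < a) (ha' : 0 < a')
    (hd : a * v₀ + b * v₁ + c * v₂ = d) (hd' : a' * v₀ + b' * v₁ + c' * v₂ = d) :
    Cong J a b c a' b' c' := by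
  obtain ⟨e, rfl⟩ : ∃ e, a = e + 1 := ⟨a - 1, by omega⟩
  obtain ⟨e', rfl⟩ : ∃ e', a' = e' + 1 := ⟨a' - 1, by omega⟩
  have h1 : (e + 1) * v₀ = e * v₀ + v₀ := by ring
  have h1' : (e' + 1) * v₀ = e' * v₀ + v₀ := by ring
  have hlt : e * v₀ + b * v₁ + c * v₂ < d := by
    have := S.hv₀; linarith
  have := IH _ hlt e b c e' b' c' rfl (by linarith)
  simpa using cong_mul 1 0 0 this

lemma share1 (S : Setup v₀ v₁ v₂ J) (IH : ∀ d' < d, KeyP v₀ v₁ v₂ J d') {a b c a' b' c' : ℕ} (hb : 0 < b) (hb' : 0 < b')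
    (hd : a * v₀ + b * v₁ + c * v₂ = d) (hd' : a' * v₀ + b' * v₁ + c' * v₂ = d) :
    Cong J a b c a' b' c' := by
  obtain ⟨e, rfl⟩ : ∃ e, b = e + 1 := ⟨b - 1, by omega⟩
  obtain ⟨e', rfl⟩ : ∃ e', b' = e' + 1 := ⟨b' - 1, by omega⟩
  have h1 : (e + 1) * v₁ = e * v₁ + v₁ := by ring
  have h1' : (e' + 1) * v₁ = e' * v₁ + v₁ := by ring
  have hlt : a * v₀ + e * v₁ + c * v₂ < d := by
    have := S.hv₁; linarith
  have := IH _ hlt a e c a' e' c' rfl (by linarith)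
  simpa using cong_mul 0 1 0 this

lemma share2 (S : Setup v₀ v₁ v₂ J) (IH : ∀ d' < d, KeyP v₀ v₁ v₂ J d') {a b c a' b' c' : ℕ} (hc : 0 < c) (hc' : 0 < c')
    (hd : a * v₀ + b * v₁ + c * v₂ = d) (hd' : a' * v₀ + b' * v₁ + c' * v₂ = d) :
    Cong J a b c a' b' c' := by
  obtain ⟨e, rfl⟩ : ∃ e, c = e + 1 := ⟨c - 1, by omega⟩
  obtain ⟨e', rfl⟩ : ∃ e', c' = e' + 1 := ⟨c' - 1, by omega⟩
  have h1 : (e + 1) * v₂ = e * v₂ + v₂ := by ring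
  have h1' : (e' + 1) * v₂ = e' * v₂ + v₂ := by ring
  have hlt : a * v₀ + b * v₁ + e * v₂ < d := by
    have := S.hv₂; linarith
  have := IH _ hlt a b e a' b' e' rfl (by linarith)
  simpa using cong_mul 0 0 1 this

end share


section cases

variable {v₀ v₁ v₂ d : ℕ} {J : Ideal (MvPolynomial (Fin 3) ℂ)}

lemma m_sum_pos (S : Setup v₀ v₁ v₂ J) : 0 < S.m₀ + S.m₁ := by
  by_contra h
  have h0 : S.m₀ = 0 := by omega
  have h1 : S.m₁ = 0 := by omega
  have := S.hk₀
  rw [h0, h1] at this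
  simp only [Nat.zero_mul, Nat.add_zero] at this
  rcases Nat.mul_eq_zero.mp this with h|h
  · exact absurd h S.hk₀pos.ne'
  · exact absurd h S.hv₀.ne'

lemma n_sum_pos (S : Setup v₀ v₁ v₂ J) : 0 < S.n₀ + S.n₁ := by
  by_contra h
  have h0 : S.n₀ = 0 := by omega
  have h1 : S.n₁ = 0 := by omega
  have := S.hk₁
  rw [h0, h1] at this
  simp only [Nat.zero_mul, Nat.add_zero] at this
  rcases Nat.mul_eq_zero.mp this with h|h
  · exact absurd h S.hk₁pos.ne'
  · exact absurd h S.hv₁.ne'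

lemma p_sum_pos (S : Setup v₀ v₁ v₂ J) : 0 < S.p₀ + S.p₁ := by
  by_contra h
  have h0 : S.p₀ = 0 := by omega
  have h1 : S.p₁ = 0 := by omega
  have := S.hk₂
  rw [h0, h1] at this
  simp only [Nat.zero_mul, Nat.add_zero] at this
  rcases Nat.mul_eq_zero.mp this with h|h
  · exact absurd h S.hk₂pos.ne'
  · exact absurd h S.hv₂.ne'

/-- case (ii): `(a,b,0)` vs `(0,0,c')` with `a,b > 0`. -/
lemma L_ii (S : Setup v₀ v₁ v₂ J) (IH : ∀ d' < d, KeyP v₀ v₁ v₂ J d')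
    {a b c' : ℕ} (ha : 0 < a) (hb : 0 < b)
    (hd : a * v₀ + b * v₁ = d) (hd' : c' * v₂ = d) :
    Cong J a b 0 0 0 c' := by
  have hd0 : 0 < d := by have := Nat.mul_pos ha S.hv₀; linarith [Nat.zero_le (b * v₁)]
  have hc' : 0 < c' := by
    rcases Nat.eq_zero_or_pos c' with h|h
    · exfalso; rw [h] at hd'; simp at hd'; omega
    · exact h
  have hge : S.k₂ ≤ c' := by
    by_contra h
    push_neg at h
    exact S.hk₂min c' hc' h ⟨a, b, by linarith⟩
  obtain ⟨e, rfl⟩ : ∃ e, c' = S.k₂ + e := ⟨c' - S.k₂, by omega⟩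
  have hstep : Cong J 0 0 (S.k₂ + e) S.p₀ S.p₁ e := by
    simpa using step2 S.hB₂ 0 0 e
  have hex : (S.k₂ + e) * v₂ = S.k₂ * v₂ + e * v₂ := by ring
  have hdm : S.p₀ * v₀ + S.p₁ * v₁ + e * v₂ = d := by
    have := S.hk₂; linarith
  have hLRm : Cong J a b 0 S.p₀ S.p₁ e := by
    rcases Nat.eq_zero_or_pos S.p₀ with hp0|hp0
    · have hp1 : 0 < S.p₁ := by have := p_sum_pos S; omega
      exact share1 S IH hb hp1 (by linarith) hdm
    · exact share0 S IH ha hp0 (by linarith) hdm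
  exact cong_trans hLRm (cong_symm hstep)

/-- case (iii): `(a,0,c)` vs `(0,b',0)` with `a,c > 0`. -/
lemma L_iii (S : Setup v₀ v₁ v₂ J) (IH : ∀ d' < d, KeyP v₀ v₁ v₂ J d')
    {a c b' : ℕ} (ha : 0 < a) (hc : 0 < c)
    (hd : a * v₀ + c * v₂ = d) (hd' : b' * v₁ = d) :
    Cong J a 0 c 0 b' 0 := by
  have hd0 : 0 < d := by have := Nat.mul_pos ha S.hv₀; linarith [Nat.zero_le (c * v₂)]
  have hb' : 0 < b' := by
    rcases Nat.eq_zero_or_pos b' with h|h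
    · exfalso; rw [h] at hd'; simp at hd'; omega
    · exact h
  have hge : S.k₁ ≤ b' := by
    by_contra h
    push_neg at h
    exact S.hk₁min b' hb' h ⟨a, c, by linarith⟩
  obtain ⟨e, rfl⟩ : ∃ e, b' = S.k₁ + e := ⟨b' - S.k₁, by omega⟩
  have hstep : Cong J 0 (S.k₁ + e) 0 S.n₀ e S.n₁ := by
    simpa using step1 S.hB₁ 0 e 0
  have hex : (S.k₁ + e) * v₁ = S.k₁ * v₁ + e * v₁ := by ring
  have hdm : S.n₀ * v₀ + e * v₁ + S.n₁ * v₂ = d := by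
    have := S.hk₁; linarith
  have hLRm : Cong J a 0 c S.n₀ e S.n₁ := by
    rcases Nat.eq_zero_or_pos S.n₀ with hn0|hn0
    · have hn1 : 0 < S.n₁ := by have := n_sum_pos S; omega
      exact share2 S IH hc hn1 (by linarith) hdm
    · exact share0 S IH ha hn0 (by linarith) hdm
  exact cong_trans hLRm (cong_symm hstep)

/-- pure vs pure: `(a,0,0)` vs `(0,b',0)`. -/
lemma pure01 (S : Setup v₀ v₁ v₂ J) (IH : ∀ d' < d, KeyP v₀ v₁ v₂ J d')
    {a b' : ℕ} (ha : 0 < a) (hd : a * v₀ = d) (hd' : b' * v₁ = d) :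
    Cong J a 0 0 0 b' 0 := by
  have hd0 : 0 < d := hd ▸ Nat.mul_pos ha S.hv₀
  have hb' : 0 < b' := by
    rcases Nat.eq_zero_or_pos b' with h|h
    · exfalso; rw [h] at hd'; simp at hd'; omega
    · exact h
  have hgeL : S.k₀ ≤ a := by
    by_contra h; push_neg at h
    exact S.hk₀min a ha h ⟨b', 0, by linarith⟩
  have hgeR : S.k₁ ≤ b' := by
    by_contra h; push_neg at h
    exact S.hk₁min b' hb' h ⟨a, 0, by linarith⟩
  obtain ⟨e, rfl⟩ : ∃ e, a = S.k₀ + e := ⟨a - S.k₀, by omega⟩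
  obtain ⟨e', rfl⟩ : ∃ e', b' = S.k₁ + e' := ⟨b' - S.k₁, by omega⟩
  have hsL : Cong J (S.k₀ + e) 0 0 e S.m₀ S.m₁ := by simpa using step0 S.hB₀ e 0 0
  have hsR : Cong J 0 (S.k₁ + e') 0 S.n₀ e' S.n₁ := by simpa using step1 S.hB₁ 0 e' 0
  have hexL : (S.k₀ + e) * v₀ = S.k₀ * v₀ + e * v₀ := by ring
  have hexR : (S.k₁ + e') * v₁ = S.k₁ * v₁ + e' * v₁ := by ring
  have hdL : e * v₀ + S.m₀ * v₁ + S.m₁ * v₂ = d := by have := S.hk₀; linarith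
  have hdR : S.n₀ * v₀ + e' * v₁ + S.n₁ * v₂ = d := by have := S.hk₁; linarith
  rcases Nat.eq_zero_or_pos S.m₀ with hm0|hm0
  · have hm1 : 0 < S.m₁ := by have := m_sum_pos S; omega
    rcases Nat.eq_zero_or_pos S.n₀ with hn0|hn0
    · have hn1 : 0 < S.n₁ := by have := n_sum_pos S; omega
      exact cong_trans hsL (cong_trans (share2 S IH hm1 hn1 hdL hdR) (cong_symm hsR))
    · exact cong_trans (share0 S IH ha hn0 (by linarith) hdR) (cong_symm hsR)
  · exact cong_trans hsL (share1 S IH hm0 hb' hdL (by linarith))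

/-- pure vs pure: `(a,0,0)` vs `(0,0,c')`. -/
lemma pure02 (S : Setup v₀ v₁ v₂ J) (IH : ∀ d' < d, KeyP v₀ v₁ v₂ J d')
    {a c' : ℕ} (ha : 0 < a) (hd : a * v₀ = d) (hd' : c' * v₂ = d) :
    Cong J a 0 0 0 0 c' := by
  have hd0 : 0 < d := hd ▸ Nat.mul_pos ha S.hv₀
  have hc' : 0 < c' := by
    rcases Nat.eq_zero_or_pos c' with h|h
    · exfalso; rw [h] at hd'; simp at hd'; omega
    · exact h
  have hgeL : S.k₀ ≤ a := by
    by_contra h; push_neg at h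
    exact S.hk₀min a ha h ⟨0, c', by linarith⟩
  have hgeR : S.k₂ ≤ c' := by
    by_contra h; push_neg at h
    exact S.hk₂min c' hc' h ⟨a, 0, by linarith⟩
  obtain ⟨e, rfl⟩ : ∃ e, a = S.k₀ + e := ⟨a - S.k₀, by omega⟩
  obtain ⟨e', rfl⟩ : ∃ e', c' = S.k₂ + e' := ⟨c' - S.k₂, by omega⟩
  have hsL : Cong J (S.k₀ + e) 0 0 e S.m₀ S.m₁ := by simpa using step0 S.hB₀ e 0 0
  have hsR : Cong J 0 0 (S.k₂ + e') S.p₀ S.p₁ e' := by simpa using step2 S.hB₂ 0 0 e'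
  have hexL : (S.k₀ + e) * v₀ = S.k₀ * v₀ + e * v₀ := by ring
  have hexR : (S.k₂ + e') * v₂ = S.k₂ * v₂ + e' * v₂ := by ring
  have hdL : e * v₀ + S.m₀ * v₁ + S.m₁ * v₂ = d := by have := S.hk₀; linarith
  have hdR : S.p₀ * v₀ + S.p₁ * v₁ + e' * v₂ = d := by have := S.hk₂; linarith
  rcases Nat.eq_zero_or_pos S.m₁ with hm1|hm1
  · have hm0 : 0 < S.m₀ := by have := m_sum_pos S; omega
    rcases Nat.eq_zero_or_pos S.p₀ with hp0|hp0
    · have hp1 : 0 < S.p₁ := by have := p_sum_pos S; omega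
      exact cong_trans hsL (cong_trans (share1 S IH hm0 hp1 hdL hdR) (cong_symm hsR))
    · exact cong_trans (share0 S IH ha hp0 (by linarith) hdR) (cong_symm hsR)
  · exact cong_trans hsL (share2 S IH hm1 hc' hdL (by linarith))

/-- pure vs pure: `(0,b,0)` vs `(0,0,c')`. -/
lemma pure12 (S : Setup v₀ v₁ v₂ J) (IH : ∀ d' < d, KeyP v₀ v₁ v₂ J d')
    {b c' : ℕ} (hb : 0 < b) (hd : b * v₁ = d) (hd' : c' * v₂ = d) :
    Cong J 0 b 0 0 0 c' := by
  have hd0 : 0 < d := hd ▸ Nat.mul_pos hb S.hv₁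
  have hc' : 0 < c' := by
    rcases Nat.eq_zero_or_pos c' with h|h
    · exfalso; rw [h] at hd'; simp at hd'; omega
    · exact h
  have hgeL : S.k₁ ≤ b := by
    by_contra h; push_neg at h
    exact S.hk₁min b hb h ⟨0, c', by linarith⟩
  have hgeR : S.k₂ ≤ c' := by
    by_contra h; push_neg at h
    exact S.hk₂min c' hc' h ⟨0, b, by linarith⟩
  obtain ⟨e, rfl⟩ : ∃ e, b = S.k₁ + e := ⟨b - S.k₁, by omega⟩
  obtain ⟨e', rfl⟩ : ∃ e', c' = S.k₂ + e' := ⟨c' - S.k₂, by omega⟩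
  have hsL : Cong J 0 (S.k₁ + e) 0 S.n₀ e S.n₁ := by simpa using step1 S.hB₁ 0 e 0
  have hsR : Cong J 0 0 (S.k₂ + e') S.p₀ S.p₁ e' := by simpa using step2 S.hB₂ 0 0 e'
  have hexL : (S.k₁ + e) * v₁ = S.k₁ * v₁ + e * v₁ := by ring
  have hexR : (S.k₂ + e') * v₂ = S.k₂ * v₂ + e' * v₂ := by ring
  have hdL : S.n₀ * v₀ + e * v₁ + S.n₁ * v₂ = d := by have := S.hk₁; linarith
  have hdR : S.p₀ * v₀ + S.p₁ * v₁ + e' * v₂ = d := by have := S.hk₂; linarith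
  rcases Nat.eq_zero_or_pos S.n₁ with hn1|hn1
  · have hn0 : 0 < S.n₀ := by have := n_sum_pos S; omega
    rcases Nat.eq_zero_or_pos S.p₁ with hp1|hp1
    · have hp0 : 0 < S.p₀ := by have := p_sum_pos S; omega
      exact cong_trans hsL (cong_trans (share0 S IH hn0 hp0 hdL hdR) (cong_symm hsR))
    · exact cong_trans (share1 S IH hb hp1 (by linarith) hdR) (cong_symm hsR)
  · exact cong_trans hsL (share2 S IH hn1 hc' hdL (by linarith))

/-- master case A: `(a,0,0)` vs `(0,b',c')` with `a > 0`. -/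
lemma masterA (S : Setup v₀ v₁ v₂ J) (IH : ∀ d' < d, KeyP v₀ v₁ v₂ J d')
    {a b' c' : ℕ} (ha : 0 < a) (hd : a * v₀ = d) (hd' : b' * v₁ + c' * v₂ = d) :
    Cong J a 0 0 0 b' c' := by
  have hd0 : 0 < d := hd ▸ Nat.mul_pos ha S.hv₀
  have hge : S.k₀ ≤ a := by
    by_contra h; push_neg at h
    exact S.hk₀min a ha h ⟨b', c', by linarith⟩
  obtain ⟨e, rfl⟩ : ∃ e, a = S.k₀ + e := ⟨a - S.k₀, by omega⟩
  have hsL : Cong J (S.k₀ + e) 0 0 e S.m₀ S.m₁ := by simpa using step0 S.hB₀ e 0 0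
  have hexL : (S.k₀ + e) * v₀ = S.k₀ * v₀ + e * v₀ := by ring
  have hdL : e * v₀ + S.m₀ * v₁ + S.m₁ * v₂ = d := by have := S.hk₀; linarith
  refine cong_trans hsL ?_
  rcases Nat.eq_zero_or_pos S.m₀ with hm0|hm0
  · have hm1 : 0 < S.m₁ := by have := m_sum_pos S; omega
    rcases Nat.eq_zero_or_pos c' with hc0|hc0
    · have hb' : 0 < b' := by
        rcases Nat.eq_zero_or_pos b' with h|h
        · exfalso; rw [h, hc0] at hd'; simp at hd'; omega
        · exact h
      subst hc0
      rcases Nat.eq_zero_or_pos e with he|he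
      · subst he; rw [hm0]
        exact cong_symm (pure12 S IH hb' (by linarith) (by rw [hm0] at hdL; linarith))
      · rw [hm0]
        exact L_iii S IH he hm1 (by rw [hm0] at hdL; linarith) (by linarith)
    · exact share2 S IH hm1 hc0 hdL (by linarith)
  · rcases Nat.eq_zero_or_pos b' with hb0|hb0
    · have hc' : 0 < c' := by
        rcases Nat.eq_zero_or_pos c' with h|h
        · exfalso; rw [h, hb0] at hd'; simp at hd'; omega
        · exact h
      subst hb0
      rcases Nat.eq_zero_or_pos S.m₁ with hm1|hm1
      · rw [hm1]
        rcases Nat.eq_zero_or_pos e with he|he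
        · subst he
          exact pure12 S IH hm0 (by rw [hm1] at hdL; linarith) (by linarith)
        · exact L_ii S IH he hm0 (by rw [hm1] at hdL; linarith) (by linarith)
      · exact share2 S IH hm1 hc' hdL (by linarith)
    · exact share1 S IH hm0 hb0 hdL (by linarith)

/-- master case B: `(0,b,0)` vs `(a',0,c')` with `b > 0`. -/
lemma masterB (S : Setup v₀ v₁ v₂ J) (IH : ∀ d' < d, KeyP v₀ v₁ v₂ J d')
    {b a' c' : ℕ} (hb : 0 < b) (hd : b * v₁ = d) (hd' : a' * v₀ + c' * v₂ = d) :
    Cong J 0 b 0 a' 0 c' := by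
  have hd0 : 0 < d := hd ▸ Nat.mul_pos hb S.hv₁
  have hge : S.k₁ ≤ b := by
    by_contra h; push_neg at h
    exact S.hk₁min b hb h ⟨a', c', by linarith⟩
  obtain ⟨e, rfl⟩ : ∃ e, b = S.k₁ + e := ⟨b - S.k₁, by omega⟩
  have hsL : Cong J 0 (S.k₁ + e) 0 S.n₀ e S.n₁ := by simpa using step1 S.hB₁ 0 e 0
  have hexL : (S.k₁ + e) * v₁ = S.k₁ * v₁ + e * v₁ := by ring
  have hdL : S.n₀ * v₀ + e * v₁ + S.n₁ * v₂ = d := by have := S.hk₁; linarith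
  refine cong_trans hsL ?_
  rcases Nat.eq_zero_or_pos S.n₀ with hn0|hn0
  · have hn1 : 0 < S.n₁ := by have := n_sum_pos S; omega
    rcases Nat.eq_zero_or_pos c' with hc0|hc0
    · have ha' : 0 < a' := by
        rcases Nat.eq_zero_or_pos a' with h|h
        · exfalso; rw [h, hc0] at hd'; simp at hd'; omega
        · exact h
      subst hc0; rw [hn0]
      exact cong_symm (masterA S IH ha' (by linarith) (by rw [hn0] at hdL; linarith))
    · exact share2 S IH hn1 hc0 hdL (by linarith)
  · rcases Nat.eq_zero_or_pos a' with ha0|ha0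
    · have hc' : 0 < c' := by
        rcases Nat.eq_zero_or_pos c' with h|h
        · exfalso; rw [h, ha0] at hd'; simp at hd'; omega
        · exact h
      subst ha0
      rcases Nat.eq_zero_or_pos S.n₁ with hn1|hn1
      · rw [hn1]
        rcases Nat.eq_zero_or_pos e with he|he
        · subst he
          exact pure02 S IH hn0 (by rw [hn1] at hdL; linarith) (by linarith)
        · exact L_ii S IH hn0 he (by rw [hn1] at hdL; linarith) (by linarith)
      · exact share2 S IH hn1 hc' hdL (by linarith)
    · exact share0 S IH hn0 ha0 hdL (by linarith)

/-- master case C: `(0,0,c)` vs `(a',b',0)` with `c > 0`. -/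
lemma masterC (S : Setup v₀ v₁ v₂ J) (IH : ∀ d' < d, KeyP v₀ v₁ v₂ J d')
    {c a' b' : ℕ} (hc : 0 < c) (hd : c * v₂ = d) (hd' : a' * v₀ + b' * v₁ = d) :
    Cong J 0 0 c a' b' 0 := by
  have hd0 : 0 < d := hd ▸ Nat.mul_pos hc S.hv₂
  have hge : S.k₂ ≤ c := by
    by_contra h; push_neg at h
    exact S.hk₂min c hc h ⟨a', b', by linarith⟩
  obtain ⟨e, rfl⟩ : ∃ e, c = S.k₂ + e := ⟨c - S.k₂, by omega⟩
  have hsL : Cong J 0 0 (S.k₂ + e) S.p₀ S.p₁ e := by simpa using step2 S.hB₂ 0 0 e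
  have hexL : (S.k₂ + e) * v₂ = S.k₂ * v₂ + e * v₂ := by ring
  have hdL : S.p₀ * v₀ + S.p₁ * v₁ + e * v₂ = d := by have := S.hk₂; linarith
  refine cong_trans hsL ?_
  rcases Nat.eq_zero_or_pos S.p₀ with hp0|hp0
  · have hp1 : 0 < S.p₁ := by have := p_sum_pos S; omega
    rcases Nat.eq_zero_or_pos b' with hb0|hb0
    · have ha' : 0 < a' := by
        rcases Nat.eq_zero_or_pos a' with h|h
        · exfalso; rw [h, hb0] at hd'; simp at hd'; omega
        · exact h
      subst hb0; rw [hp0]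
      exact cong_symm (masterA S IH ha' (by linarith) (by rw [hp0] at hdL; linarith))
    · exact share1 S IH hp1 hb0 hdL (by linarith)
  · rcases Nat.eq_zero_or_pos a' with ha0|ha0
    · have hb' : 0 < b' := by
        rcases Nat.eq_zero_or_pos b' with h|h
        · exfalso; rw [h, ha0] at hd'; simp at hd'; omega
        · exact h
      subst ha0
      rcases Nat.eq_zero_or_pos S.p₁ with hp1|hp1
      · rw [hp1]
        rcases Nat.eq_zero_or_pos e with he|he
        · subst he
          exact pure01 S IH hp0 (by rw [hp1] at hdL; linarith) (by linarith)
        · exact L_iii S IH hp0 he (by rw [hp1] at hdL; linarith) (by linarith)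
      · exact share1 S IH hp1 hb' hdL (by linarith)
    · exact share0 S IH hp0 ha0 hdL (by linarith)

/-- disjoint-support case with `a > 0`, `a' = 0`. -/
lemma resolved (S : Setup v₀ v₁ v₂ J) (IH : ∀ d' < d, KeyP v₀ v₁ v₂ J d')
    {a b c b' c' : ℕ} (ha : 0 < a)
    (hbb : b = 0 ∨ b' = 0) (hcc : c = 0 ∨ c' = 0)
    (hd : a * v₀ + b * v₁ + c * v₂ = d) (hd' : 0 * v₀ + b' * v₁ + c' * v₂ = d) :
    Cong J a b c 0 b' c' := by
  rcases Nat.eq_zero_or_pos c with hc|hc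
  · subst hc
    rcases Nat.eq_zero_or_pos b with hb|hb
    · subst hb
      exact masterA S IH ha (by linarith) (by linarith)
    · have hb' : b' = 0 := by omega
      subst hb'
      exact L_ii S IH ha hb (by linarith) (by linarith)
  · have hc' : c' = 0 := by omega
    subst hc'
    rcases Nat.eq_zero_or_pos b with hb|hb
    · subst hb
      exact L_iii S IH ha hc (by linarith) (by linarith)
    · have hb' : b' = 0 := by omega
      exfalso
      rw [hb'] at hd'
      simp at hd'
      have := Nat.mul_pos ha S.hv₀
      have := Nat.zero_le (b * v₁)
      have := Nat.zero_le (c * v₂)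
      omega

end cases


theorem keyAll {v₀ v₁ v₂ : ℕ} {J : Ideal (MvPolynomial (Fin 3) ℂ)}
    (S : Setup v₀ v₁ v₂ J) : ∀ d, KeyP v₀ v₁ v₂ J d := by
  intro d
  induction d using Nat.strong_induction_on with
  | _ d IH =>
  intro a b c a' b' c' hd hd'
  by_cases hA : 0 < a ∧ 0 < a'
  · exact share0 S IH hA.1 hA.2 hd hd'
  by_cases hB : 0 < b ∧ 0 < b'
  · exact share1 S IH hB.1 hB.2 hd hd'
  by_cases hC : 0 < c ∧ 0 < c'
  · exact share2 S IH hC.1 hC.2 hd hd'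
  rcases Nat.eq_zero_or_pos a with haz|hap
  · rcases Nat.eq_zero_or_pos a' with haz'|hap'
    · -- a = a' = 0
      subst haz; subst haz'
      rcases Nat.eq_zero_or_pos b with hbz|hbp
      · subst hbz
        rcases Nat.eq_zero_or_pos b' with hbz'|hbp'
        · subst hbz'
          have hcc : c * v₂ = c' * v₂ := by linarith
          have : c = c' := Nat.eq_of_mul_eq_mul_right S.hv₂ hcc
          subst this
          exact cong_refl 0 0 c
        · -- b = 0, b' > 0 : (0,0,c) vs (0,b',c')
          have hc : 0 < c := by
            rcases Nat.eq_zero_or_pos c with h|h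
            · exfalso; rw [h] at hd; simp at hd
              have := Nat.mul_pos hbp' S.hv₁
              have := Nat.zero_le (c' * v₂)
              omega
            · exact h
          have hc' : c' = 0 := by omega
          subst hc'
          exact cong_symm (pure12 S IH hbp' (by linarith) (by linarith))
      · -- b > 0 so b' = 0
        have hb' : b' = 0 := by omega
        subst hb'
        have hc : c = 0 := by
          rcases Nat.eq_zero_or_pos c with h|h
          · exact h
          · exfalso
            have hc' : c' = 0 := by omega
            rw [hc'] at hd'
            simp at hd'
            have := Nat.mul_pos hbp S.hv₁
            have := Nat.zero_le (c * v₂)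
            omega
        subst hc
        exact pure12 S IH hbp (by linarith) (by linarith)
    · -- a = 0, a' > 0 : symmetric
      subst haz
      have hbb : b' = 0 ∨ b = 0 := by omega
      have hcc : c' = 0 ∨ c = 0 := by omega
      exact cong_symm (resolved S IH hap' hbb hcc hd' hd)
  · have haz' : a' = 0 := by omega
    subst haz'
    exact resolved S IH hap (by omega) (by omega) hd hd'


lemma mon_eq_monomial (a : Fin 3 →₀ ℕ) :
    MvPolynomial.monomial a (1 : ℂ) = mon (a 0) (a 1) (a 2) := by
  have h : a = Finsupp.single 0 (a 0) + Finsupp.single 1 (a 1) + Finsupp.single 2 (a 2) := by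
    ext i
    fin_cases i <;> simp [Finsupp.single_apply]
  conv_lhs => rw [h]
  simp only [mon, X_pow_eq_monomial, monomial_mul, one_mul]

lemma v0_pos {Γ : AddSubmonoid ℕ} {v₀ v₁ v₂ : ℕ} (h01 : v₀ < v₁) (h12 : v₁ < v₂)
    (hmin : MinGen Γ ![v₀, v₁, v₂]) : 0 < v₀ := by
  by_contra h
  have hv0 : v₀ = 0 := by omega
  obtain ⟨hsm, hcl, hmin3⟩ := hmin
  have hrange : Set.range ![v₀, v₁, v₂] = {v₀, v₁, v₂} := by
    rw [Matrix.range_cons, Matrix.range_cons, Matrix.range_cons_empty]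
    ext x; simp; tauto
  refine hmin3 {v₁, v₂} ?_ ?_
  · rw [hrange]
    constructor
    · intro x hx
      simp only [Set.mem_insert_iff, Set.mem_singleton_iff] at hx ⊢
      tauto
    · intro hsup
      have := hsup (by simp : v₀ ∈ ({v₀, v₁, v₂} : Set ℕ))
      simp only [Set.mem_insert_iff, Set.mem_singleton_iff] at this
      omega
  · rw [← hcl, hrange]
    apply le_antisymm
    · exact AddSubmonoid.closure_mono (by
        intro x hx
        simp only [Set.mem_insert_iff, Set.mem_singleton_iff] at hx ⊢
        tauto)
    · rw [AddSubmonoid.closure_le]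
      intro x hx
      simp only [Set.mem_insert_iff, Set.mem_singleton_iff] at hx
      rcases hx with rfl|rfl|rfl
      · rw [hv0]; exact zero_mem _
      · exact AddSubmonoid.subset_closure (by simp)
      · exact AddSubmonoid.subset_closure (by simp)

end Stmt6Aux

/-- for a numerical semigroup minimally generated by `v₀ < v₁ < v₂`, the
ideal of `ℂ[X,Y,Z]` (weights `v₀,v₁,v₂`) generated by the weighted-homogeneous
polynomials vanishing at `(1,1,1)` is generated by the three binomials
`X^k₀ − Y^m₀ Z^m₁`, `Y^k₁ − X^n₀ Z^n₁` and `Z^k₂ − X^p₀ Y^p₁` built from the minimal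
relations. -/
theorem stmt6 (Γ : AddSubmonoid ℕ) (hfin : ((Γ : Set ℕ))ᶜ.Finite)
    (v₀ v₁ v₂ : ℕ) (h01 : v₀ < v₁) (h12 : v₁ < v₂)
    (hmin : MinGen Γ ![v₀, v₁, v₂])
    (k₀ m₀ m₁ : ℕ) (hk₀pos : 0 < k₀) (hk₀ : k₀ * v₀ = m₀ * v₁ + m₁ * v₂)
    (hk₀min : ∀ k : ℕ, 0 < k → k < k₀ → ¬∃ m m' : ℕ, k * v₀ = m * v₁ + m' * v₂)
    (k₁ n₀ n₁ : ℕ) (hk₁pos : 0 < k₁) (hk₁ : k₁ * v₁ = n₀ * v₀ + n₁ * v₂)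
    (hk₁min : ∀ k : ℕ, 0 < k → k < k₁ → ¬∃ n n' : ℕ, k * v₁ = n * v₀ + n' * v₂)
    (k₂ p₀ p₁ : ℕ) (hk₂pos : 0 < k₂) (hk₂ : k₂ * v₂ = p₀ * v₀ + p₁ * v₁)
    (hk₂min : ∀ k : ℕ, 0 < k → k < k₂ → ¬∃ p p' : ℕ, k * v₂ = p * v₀ + p' * v₁) :
    Ideal.span {f : MvPolynomial (Fin 3) ℂ |
        (∃ d : ℕ, ∀ a ∈ f.support, a 0 * v₀ + a 1 * v₁ + a 2 * v₂ = d) ∧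
          MvPolynomial.eval (fun _ => (1 : ℂ)) f = 0} =
    Ideal.span ({MvPolynomial.X 0 ^ k₀ - MvPolynomial.X 1 ^ m₀ * MvPolynomial.X 2 ^ m₁,
        MvPolynomial.X 1 ^ k₁ - MvPolynomial.X 0 ^ n₀ * MvPolynomial.X 2 ^ n₁,
        MvPolynomial.X 2 ^ k₂ - MvPolynomial.X 0 ^ p₀ * MvPolynomial.X 1 ^ p₁} :
      Set (MvPolynomial (Fin 3) ℂ)) := by
  classical
  have hv₀ : 0 < v₀ := Stmt6Aux.v0_pos h01 h12 hmin
  have hv₁ : 0 < v₁ := by omega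
  have hv₂ : 0 < v₂ := by omega
  set J : Ideal (MvPolynomial (Fin 3) ℂ) :=
    Ideal.span ({MvPolynomial.X 0 ^ k₀ - MvPolynomial.X 1 ^ m₀ * MvPolynomial.X 2 ^ m₁,
        MvPolynomial.X 1 ^ k₁ - MvPolynomial.X 0 ^ n₀ * MvPolynomial.X 2 ^ n₁,
        MvPolynomial.X 2 ^ k₂ - MvPolynomial.X 0 ^ p₀ * MvPolynomial.X 1 ^ p₁} :
      Set (MvPolynomial (Fin 3) ℂ)) with hJ
  have hB₀ : MvPolynomial.X 0 ^ k₀ - MvPolynomial.X 1 ^ m₀ * MvPolynomial.X 2 ^ m₁ ∈ J :=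
    Ideal.subset_span (Set.mem_insert _ _)
  have hB₁ : MvPolynomial.X 1 ^ k₁ - MvPolynomial.X 0 ^ n₀ * MvPolynomial.X 2 ^ n₁ ∈ J :=
    Ideal.subset_span (Set.mem_insert_of_mem _ (Set.mem_insert _ _))
  have hB₂ : MvPolynomial.X 2 ^ k₂ - MvPolynomial.X 0 ^ p₀ * MvPolynomial.X 1 ^ p₁ ∈ J :=
    Ideal.subset_span (Set.mem_insert_of_mem _ (Set.mem_insert_of_mem _ rfl))
  have S : Stmt6Aux.Setup v₀ v₁ v₂ J :=
    ⟨k₀, m₀, m₁, k₁, n₀, n₁, k₂, p₀, p₁, hv₀, hv₁, hv₂, hk₀pos, hk₀, hk₀min,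
      hk₁pos, hk₁, hk₁min, hk₂pos, hk₂, hk₂min, hB₀, hB₁, hB₂⟩
  apply le_antisymm
  · rw [Ideal.span_le]
    rintro f ⟨⟨d, hdeg⟩, heval⟩
    show f ∈ J
    have hsum : ∑ aexp ∈ f.support, MvPolynomial.coeff aexp f = 0 := by
      rw [MvPolynomial.eval_eq] at heval
      simpa using heval
    rcases Finset.eq_empty_or_nonempty f.support with hs|⟨a₀, ha₀⟩
    · rw [MvPolynomial.support_eq_empty] at hs
      rw [hs]
      exact J.zero_mem
    · have hC0 : (∑ aexp ∈ f.support, MvPolynomial.C (MvPolynomial.coeff aexp f)) =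
          (0 : MvPolynomial (Fin 3) ℂ) := by
        rw [← map_sum, hsum, map_zero]
      have hrep : (∑ aexp ∈ f.support, MvPolynomial.C (MvPolynomial.coeff aexp f) *
          (MvPolynomial.monomial aexp 1 - MvPolynomial.monomial a₀ 1)) = f := by
        simp only [mul_sub]
        rw [Finset.sum_sub_distrib, ← Finset.sum_mul, hC0, zero_mul, sub_zero]
        conv_rhs => rw [MvPolynomial.as_sum f]
        refine Finset.sum_congr rfl fun aexp _ => ?_
        rw [MvPolynomial.C_mul_monomial, mul_one]
      rw [← hrep]
      refine Ideal.sum_mem _ fun aexp haexp => Ideal.mul_mem_left _ _ ?_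
      have hk := Stmt6Aux.keyAll S d (aexp 0) (aexp 1) (aexp 2) (a₀ 0) (a₀ 1) (a₀ 2)
        (hdeg aexp haexp) (hdeg a₀ ha₀)
      rw [show MvPolynomial.monomial aexp (1 : ℂ) - MvPolynomial.monomial a₀ (1 : ℂ) =
        Stmt6Aux.mon (aexp 0) (aexp 1) (aexp 2) - Stmt6Aux.mon (a₀ 0) (a₀ 1) (a₀ 2) from by
          rw [Stmt6Aux.mon_eq_monomial aexp, Stmt6Aux.mon_eq_monomial a₀]]
      exact hk
  · rw [Ideal.span_le]
    intro g hg
    simp only [Set.mem_insert_iff, Set.mem_singleton_iff] at hg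
    have mem_of : ∀ (u w : Fin 3 →₀ ℕ) (dd : ℕ),
        u 0 * v₀ + u 1 * v₁ + u 2 * v₂ = dd → w 0 * v₀ + w 1 * v₁ + w 2 * v₂ = dd →
        ∀ aexp ∈ (MvPolynomial.monomial u (1:ℂ) - MvPolynomial.monomial w (1:ℂ)).support,
          aexp 0 * v₀ + aexp 1 * v₁ + aexp 2 * v₂ = dd := by
      intro u w dd hu hw aexp ha
      have h2 := MvPolynomial.support_sub _ _ _ ha
      rw [Finset.mem_union, MvPolynomial.support_monomial, MvPolynomial.support_monomial] at h2
      rw [if_neg (one_ne_zero' ℂ), if_neg (one_ne_zero' ℂ)] at h2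
      simp only [Finset.mem_singleton] at h2
      rcases h2 with rfl|rfl
      · exact hu
      · exact hw
    rcases hg with rfl|rfl|rfl
    · refine Ideal.subset_span ⟨⟨k₀ * v₀, ?_⟩, by simp⟩
      have hx : (MvPolynomial.X 0 ^ k₀ - MvPolynomial.X 1 ^ m₀ * MvPolynomial.X 2 ^ m₁ :
          MvPolynomial (Fin 3) ℂ) =
          MvPolynomial.monomial (Finsupp.single 0 k₀) 1 -
          MvPolynomial.monomial (Finsupp.single 1 m₀ + Finsupp.single 2 m₁) 1 := by
        simp [MvPolynomial.X_pow_eq_monomial, MvPolynomial.monomial_mul]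
      rw [hx]
      refine mem_of _ _ _ ?_ ?_
      · simp [Finsupp.single_apply]
      · simp only [Finsupp.add_apply, Finsupp.single_apply]
        norm_num [show ((2:Fin 3) = 0) ↔ False by decide, show ((2:Fin 3) = 1) ↔ False by decide,
          show ((1:Fin 3) = 2) ↔ False by decide, show ((0:Fin 3) = 1) ↔ False by decide,
          show ((0:Fin 3) = 2) ↔ False by decide, show ((1:Fin 3) = 0) ↔ False by decide,
          show ((2:Fin 3) = 2) ↔ True by decide]
        linarith [hk₀]
    · refine Ideal.subset_span ⟨⟨k₁ * v₁, ?_⟩, by simp⟩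
      have hx : (MvPolynomial.X 1 ^ k₁ - MvPolynomial.X 0 ^ n₀ * MvPolynomial.X 2 ^ n₁ :
          MvPolynomial (Fin 3) ℂ) =
          MvPolynomial.monomial (Finsupp.single 1 k₁) 1 -
          MvPolynomial.monomial (Finsupp.single 0 n₀ + Finsupp.single 2 n₁) 1 := by
        simp [MvPolynomial.X_pow_eq_monomial, MvPolynomial.monomial_mul]
      rw [hx]
      refine mem_of _ _ _ ?_ ?_
      · simp [Finsupp.single_apply]
      · simp only [Finsupp.add_apply, Finsupp.single_apply]
        norm_num [show ((2:Fin 3) = 0) ↔ False by decide, show ((2:Fin 3) = 1) ↔ False by decide,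
          show ((1:Fin 3) = 2) ↔ False by decide, show ((0:Fin 3) = 1) ↔ False by decide,
          show ((0:Fin 3) = 2) ↔ False by decide, show ((1:Fin 3) = 0) ↔ False by decide,
          show ((2:Fin 3) = 2) ↔ True by decide]
        linarith [hk₁]
    · refine Ideal.subset_span ⟨⟨k₂ * v₂, ?_⟩, by simp⟩
      have hx : (MvPolynomial.X 2 ^ k₂ - MvPolynomial.X 0 ^ p₀ * MvPolynomial.X 1 ^ p₁ :
          MvPolynomial (Fin 3) ℂ) =
          MvPolynomial.monomial (Finsupp.single 2 k₂) 1 -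
          MvPolynomial.monomial (Finsupp.single 0 p₀ + Finsupp.single 1 p₁) 1 := by
        simp [MvPolynomial.X_pow_eq_monomial, MvPolynomial.monomial_mul]
      rw [hx]
      refine mem_of _ _ _ ?_ ?_
      · simp [Finsupp.single_apply]
      · simp only [Finsupp.add_apply, Finsupp.single_apply]
        norm_num [show ((2:Fin 3) = 0) ↔ False by decide, show ((2:Fin 3) = 1) ↔ False by decide,
          show ((1:Fin 3) = 2) ↔ False by decide, show ((0:Fin 3) = 1) ↔ False by decide,
          show ((0:Fin 3) = 2) ↔ False by decide, show ((1:Fin 3) = 0) ↔ False by decide,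
          show ((2:Fin 3) = 2) ↔ True by decide]
        linarith [hk₂]
end
end

section
/- Let Γ be the additive submonoid of ℕ generated by {4, 6, 13} (a numerical semigroup with conductor 16). Let x := t⁴ + a₅t⁵ + a₇t⁷ + a₉t⁹ + a₁₁t¹¹ + a₁₅t¹⁵, y := t⁶ + b₇t⁷ + b₉t⁹ + b₁₁t¹¹ + b₁₅t¹⁵, z := t¹³ + c₁₅t¹⁵ with complex coefficients, and suppose the ℂ-subalgebra R := ⟨x, y, z⟩ + t¹⁶·ℂ[[t]] satisfies Γ_R = Γ. Then the following are equivalent: (i) there exist f, g ∈ ℂ[[t]] with R = ⟨f, g⟩ + t¹⁶·ℂ[[t]]; (ii) R = ⟨x, y⟩ + t¹⁶·ℂ[[t]]; (iii) the power series y² − x³ has order 13; (iv) 2b₇ − 3a₅ ≠ 0. -/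
noncomputable section

namespace Stmt18Aux
open PowerSeries

lemma coeff_X16_mul (m : ℕ) (hm : m < 16) (h : PowerSeries ℂ) :
    PowerSeries.coeff (R := ℂ) m (X ^ 16 * h) = 0 :=
  PowerSeries.X_pow_dvd_iff.mp (dvd_mul_right _ _) m hm

lemma gammaP {n : ℕ} (hn : n ∈ AddSubmonoid.closure ({4, 6, 13} : Set ℕ)) :
    n = 0 ∨ n = 4 ∨ n = 6 ∨ n = 8 ∨ n = 10 ∨ n = 12 ∨ n = 13 ∨ n = 14 ∨ 16 ≤ n := by
  have h : AddSubmonoid.closure ({4, 6, 13} : Set ℕ) ≤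
      { carrier := {n | n = 0 ∨ n = 4 ∨ n = 6 ∨ n = 8 ∨ n = 10 ∨ n = 12 ∨ n = 13 ∨ n = 14 ∨ 16 ≤ n}
        add_mem' := by
          intro a b ha hb
          simp only [Set.mem_setOf_eq] at *
          omega
        zero_mem' := by simp } := by
    rw [AddSubmonoid.closure_le]
    intro m hm
    simp only [Set.mem_insert_iff, Set.mem_singleton_iff] at hm
    show m = 0 ∨ m = 4 ∨ m = 6 ∨ m = 8 ∨ m = 10 ∨ m = 12 ∨ m = 13 ∨ m = 14 ∨ 16 ≤ m
    omega
  exact h hn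

def adjA {k : ℕ} (v : Fin k → PowerSeries ℂ) (c : ℕ) : Subalgebra ℂ (PowerSeries ℂ) where
  carrier := adjSet v c
  add_mem' := by
    rintro a b ⟨p, h, rfl⟩ ⟨q, h', rfl⟩
    exact ⟨p + q, h + h', by rw [map_add]; ring⟩
  mul_mem' := by
    rintro a b ⟨p, h, rfl⟩ ⟨q, h', rfl⟩
    exact ⟨p * q, (MvPolynomial.aeval v p) * h' + h * (MvPolynomial.aeval v q) + X ^ c * (h * h'),
      by rw [map_mul]; ring⟩
  one_mem' := ⟨1, 0, by simp⟩
  zero_mem' := ⟨0, 0, by simp⟩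
  algebraMap_mem' := fun r => ⟨MvPolynomial.C r, 0, by simp⟩

lemma mem_adjA {k : ℕ} {v : Fin k → PowerSeries ℂ} {c : ℕ} {s : PowerSeries ℂ} :
    s ∈ adjA v c ↔ s ∈ adjSet v c := Iff.rfl

lemma gen_mem_adjA {k : ℕ} (v : Fin k → PowerSeries ℂ) (c : ℕ) (i : Fin k) :
    v i ∈ adjA v c := ⟨MvPolynomial.X i, 0, by simp⟩

lemma tail_mem_adjA {k : ℕ} (v : Fin k → PowerSeries ℂ) (c : ℕ) (h : PowerSeries ℂ) :
    X ^ c * h ∈ adjA v c := ⟨0, h, by simp⟩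

lemma C_mem_adjA {k : ℕ} (v : Fin k → PowerSeries ℂ) (c : ℕ) (a : ℂ) :
    (C (R := ℂ) a : PowerSeries ℂ) ∈ adjA v c := ⟨MvPolynomial.C a, 0, by simp [PowerSeries.algebraMap_apply]⟩

lemma adjSet_subset {k : ℕ} {v : Fin k → PowerSeries ℂ} {c : ℕ}
    {A : Subalgebra ℂ (PowerSeries ℂ)}
    (hv : ∀ i, v i ∈ A) (hc : ∀ h, X ^ c * h ∈ A) : adjSet v c ⊆ A := by
  rintro _ ⟨p, h, rfl⟩
  refine add_mem ?_ (hc h)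
  have h1 : MvPolynomial.aeval v p ∈ Algebra.adjoin ℂ (Set.range v) := by
    rw [Algebra.adjoin_range_eq_range_aeval]; exact ⟨p, rfl⟩
  exact Algebra.adjoin_le (by rintro _ ⟨i, rfl⟩; exact hv i) h1


section Expansions
lemma ex2 (a₅ a₇ a₉ a₁₁ a₁₅ : ℂ) (x : PowerSeries ℂ)
    (hx : x = X ^ 4 + C (R := ℂ) a₅ * X ^ 5 + C (R := ℂ) a₇ * X ^ 7 + C (R := ℂ) a₉ * X ^ 9 + C (R := ℂ) a₁₁ * X ^ 11 + C (R := ℂ) a₁₅ * X ^ 15) :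
    x ^ 2 = X ^ 8 + C (R := ℂ) (2 * a₅) * X ^ 9 + C (R := ℂ) (a₅ * a₅) * X ^ 10 + C (R := ℂ) (2 * a₇) * X ^ 11 + C (R := ℂ) (2 * a₅ * a₇) * X ^ 12 + C (R := ℂ) (2 * a₉) * X ^ 13 + C (R := ℂ) (a₇ * a₇ + 2 * a₅ * a₉) * X ^ 14 + C (R := ℂ) (2 * a₁₁) * X ^ 15
      + X ^ 16 * (C (R := ℂ) (2 * a₇ * a₉ + 2 * a₅ * a₁₁) * (1 : PowerSeries ℂ) + C (R := ℂ) (a₉ * a₉ + 2 * a₇ * a₁₁) * X ^ 2 + C (R := ℂ) (2 * a₁₅) * X ^ 3 + C (R := ℂ) (2 * a₉ * a₁₁ + 2 * a₅ * a₁₅) * X ^ 4 + C (R := ℂ) (a₁₁ * a₁₁ + 2 * a₇ * a₁₅) * X ^ 6 + C (R := ℂ) (2 * a₉ * a₁₅) * X ^ 8 + C (R := ℂ) (2 * a₁₁ * a₁₅) * X ^ 10 + C (R := ℂ) (a₁₅ * a₁₅) * X ^ 14) := by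
  rw [hx]
  simp only [map_mul, map_add, map_ofNat]
  ring

lemma exy (a₅ a₇ a₉ a₁₁ a₁₅ b₇ b₉ b₁₁ b₁₅ : ℂ) (x y : PowerSeries ℂ)
    (hx : x = X ^ 4 + C (R := ℂ) a₅ * X ^ 5 + C (R := ℂ) a₇ * X ^ 7 + C (R := ℂ) a₉ * X ^ 9 + C (R := ℂ) a₁₁ * X ^ 11 + C (R := ℂ) a₁₅ * X ^ 15)
    (hy : y = X ^ 6 + C (R := ℂ) b₇ * X ^ 7 + C (R := ℂ) b₉ * X ^ 9 + C (R := ℂ) b₁₁ * X ^ 11 + C (R := ℂ) b₁₅ * X ^ 15) :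
    x * y = X ^ 10 + C (R := ℂ) (b₇ + a₅) * X ^ 11 + C (R := ℂ) (a₅ * b₇) * X ^ 12 + C (R := ℂ) (b₉ + a₇) * X ^ 13 + C (R := ℂ) (a₇ * b₇ + a₅ * b₉) * X ^ 14 + C (R := ℂ) (b₁₁ + a₉) * X ^ 15
      + X ^ 16 * (C (R := ℂ) (a₉ * b₇ + a₇ * b₉ + a₅ * b₁₁) * (1 : PowerSeries ℂ) + C (R := ℂ) (a₁₁) * X ^ 1 + C (R := ℂ) (a₁₁ * b₇ + a₉ * b₉ + a₇ * b₁₁) * X ^ 2 + C (R := ℂ) (b₁₅) * X ^ 3 + C (R := ℂ) (a₁₁ * b₉ + a₉ * b₁₁ + a₅ * b₁₅) * X ^ 4 + C (R := ℂ) (a₁₅) * X ^ 5 + C (R := ℂ) (a₁₅ * b₇ + a₁₁ * b₁₁ + a₇ * b₁₅) * X ^ 6 + C (R := ℂ) (a₁₅ * b₉ + a₉ * b₁₅) * X ^ 8 + C (R := ℂ) (a₁₅ * b₁₁ + a₁₁ * b₁₅) * X ^ 10 + C (R := ℂ) (a₁₅ * b₁₅) * X ^ 14) := by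
  rw [hx, hy]
  simp only [map_mul, map_add, map_ofNat]
  ring

lemma ex3 (a₅ a₇ a₉ a₁₁ a₁₅ : ℂ) (x : PowerSeries ℂ)
    (hx : x = X ^ 4 + C (R := ℂ) a₅ * X ^ 5 + C (R := ℂ) a₇ * X ^ 7 + C (R := ℂ) a₉ * X ^ 9 + C (R := ℂ) a₁₁ * X ^ 11 + C (R := ℂ) a₁₅ * X ^ 15) :
    x ^ 3 = X ^ 12 + C (R := ℂ) (3 * a₅) * X ^ 13 + C (R := ℂ) (3 * a₅ * a₅) * X ^ 14 + C (R := ℂ) (3 * a₇ + a₅ * a₅ * a₅) * X ^ 15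
      + X ^ 16 * (C (R := ℂ) (6 * a₅ * a₇) * (1 : PowerSeries ℂ) + C (R := ℂ) (3 * a₉ + 3 * a₅ * a₅ * a₇) * X ^ 1 + C (R := ℂ) (3 * a₇ * a₇ + 6 * a₅ * a₉) * X ^ 2 + C (R := ℂ) (3 * a₁₁ + 3 * a₅ * a₇ * a₇ + 3 * a₅ * a₅ * a₉) * X ^ 3 + C (R := ℂ) (6 * a₇ * a₉ + 6 * a₅ * a₁₁) * X ^ 4 + C (R := ℂ) (a₇ * a₇ * a₇ + 6 * a₅ * a₇ * a₉ + 3 * a₅ * a₅ * a₁₁) * X ^ 5 + C (R := ℂ) (3 * a₉ * a₉ + 6 * a₇ * a₁₁) * X ^ 6 + C (R := ℂ) (3 * a₁₅ + 3 * a₇ * a₇ * a₉ + 3 * a₅ * a₉ * a₉ + 6 * a₅ * a₇ * a₁₁) * X ^ 7 + C (R := ℂ) (6 * a₉ * a₁₁ + 6 * a₅ * a₁₅) * X ^ 8 + C (R := ℂ) (3 * a₇ * a₉ * a₉ + 3 * a₇ * a₇ * a₁₁ + 6 * a₅ * a₉ * a₁₁ + 3 * a₅ * a₅ * a₁₅)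 * X ^ 9 + C (R := ℂ) (3 * a₁₁ * a₁₁ + 6 * a₇ * a₁₅) * X ^ 10 + C (R := ℂ) (a₉ * a₉ * a₉ + 6 * a₇ * a₉ * a₁₁ + 3 * a₅ * a₁₁ * a₁₁ + 6 * a₅ * a₇ * a₁₅) * X ^ 11 + C (R := ℂ) (6 * a₉ * a₁₅) * X ^ 12 + C (R := ℂ) (3 * a₉ * a₉ * a₁₁ + 3 * a₇ * a₁₁ * a₁₁ + 3 * a₇ * a₇ * a₁₅ + 6 * a₅ * a₉ * a₁₅) * X ^ 13 + C (R := ℂ) (6 * a₁₁ * a₁₅) * X ^ 14 + C (R := ℂ) (3 * a₉ * a₁₁ * a₁₁ + 6 * a₇ * a₉ * a₁₅ + 6 * a₅ * a₁₁ * a₁₅) * X ^ 15 + C (R := ℂ) (a₁₁ * a₁₁ * a₁₁ + 3 * a₉ * a₉ * a₁₅ + 6 * a₇ * a₁₁ * a₁₅) * X ^ 17 + C (R := ℂ) (3 * a₁₅ * a₁₅) * X ^ 18 + C (R := ℂ) (6 * a₉ * a₁₁ * a₁₅ + 3 * a₅ * a₁₅ * a₁₅) * X ^ 19 + C (R :=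 ℂ) (3 * a₁₁ * a₁₁ * a₁₅ + 3 * a₇ * a₁₅ * a₁₅) * X ^ 21 + C (R := ℂ) (3 * a₉ * a₁₅ * a₁₅) * X ^ 23 + C (R := ℂ) (3 * a₁₁ * a₁₅ * a₁₅) * X ^ 25 + C (R := ℂ) (a₁₅ * a₁₅ * a₁₅) * X ^ 29) := by
  rw [hx]
  simp only [map_mul, map_add, map_ofNat]
  ring

lemma ey2 (b₇ b₉ b₁₁ b₁₅ : ℂ) (y : PowerSeries ℂ)
    (hy : y = X ^ 6 + C (R := ℂ) b₇ * X ^ 7 + C (R := ℂ) b₉ * X ^ 9 + C (R := ℂ) b₁₁ * X ^ 11 + C (R := ℂ) b₁₅ * X ^ 15) :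
    y ^ 2 = X ^ 12 + C (R := ℂ) (2 * b₇) * X ^ 13 + C (R := ℂ) (b₇ * b₇) * X ^ 14 + C (R := ℂ) (2 * b₉) * X ^ 15
      + X ^ 16 * (C (R := ℂ) (2 * b₇ * b₉) * (1 : PowerSeries ℂ) + C (R := ℂ) (2 * b₁₁) * X ^ 1 + C (R := ℂ) (b₉ * b₉ + 2 * b₇ * b₁₁) * X ^ 2 + C (R := ℂ) (2 * b₉ * b₁₁) * X ^ 4 + C (R := ℂ) (2 * b₁₅) * X ^ 5 + C (R := ℂ) (b₁₁ * b₁₁ + 2 * b₇ * b₁₅) * X ^ 6 + C (R := ℂ) (2 * b₉ * b₁₅) * X ^ 8 + C (R := ℂ) (2 * b₁₁ * b₁₅) * X ^ 10 + C (R := ℂ) (b₁₅ * b₁₅) * X ^ 14) := by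
  rw [hy]
  simp only [map_mul, map_add, map_ofNat]
  ring

lemma ex2y (a₅ a₇ a₉ a₁₁ a₁₅ b₇ b₉ b₁₁ b₁₅ : ℂ) (x y : PowerSeries ℂ)
    (hx : x = X ^ 4 + C (R := ℂ) a₅ * X ^ 5 + C (R := ℂ) a₇ * X ^ 7 + C (R := ℂ) a₉ * X ^ 9 + C (R := ℂ) a₁₁ * X ^ 11 + C (R := ℂ) a₁₅ * X ^ 15)
    (hy : y = X ^ 6 + C (R := ℂ) b₇ * X ^ 7 + C (R := ℂ) b₉ * X ^ 9 + C (R := ℂ) b₁₁ * X ^ 11 + C (R := ℂ) b₁₅ * X ^ 15) :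
    x ^ 2 * y = X ^ 14 + C (R := ℂ) (b₇ + 2 * a₅) * X ^ 15
      + X ^ 16 * (C (R := ℂ) (2 * a₅ * b₇ + a₅ * a₅) * (1 : PowerSeries ℂ) + C (R := ℂ) (b₉ + 2 * a₇ + a₅ * a₅ * b₇) * X ^ 1 + C (R := ℂ) (2 * a₇ * b₇ + 2 * a₅ * b₉ + 2 * a₅ * a₇) * X ^ 2 + C (R := ℂ) (b₁₁ + 2 * a₉ + 2 * a₅ * a₇ * b₇ + a₅ * a₅ * b₉) * X ^ 3 + C (R := ℂ) (2 * a₉ * b₇ + 2 * a₇ * b₉ + a₇ * a₇ + 2 * a₅ * b₁₁ + 2 * a₅ * a₉) * X ^ 4 + C (R := ℂ) (2 * a₁₁ + a₇ * a₇ * b₇ + 2 * a₅ * a₉ * b₇ + 2 * a₅ * a₇ * b₉ + a₅ * a₅ * b₁₁) * X ^ 5 + C (R := ℂ) (2 * a₁₁ * b₇ + 2 * a₉ * b₉ + 2 * a₇ * b₁₁ + 2 * a₇ * a₉ + 2 * a₅ * a₁₁) * X ^ 6 + C (R := ℂ) (b₁₅ + 2 * a₇ * a₉ * b₇ + a₇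 * a₇ * b₉ + 2 * a₅ * a₁₁ * b₇ + 2 * a₅ * a₉ * b₉ + 2 * a₅ * a₇ * b₁₁) * X ^ 7 + C (R := ℂ) (2 * a₁₁ * b₉ + 2 * a₉ * b₁₁ + a₉ * a₉ + 2 * a₇ * a₁₁ + 2 * a₅ * b₁₅) * X ^ 8 + C (R := ℂ) (2 * a₁₅ + a₉ * a₉ * b₇ + 2 * a₇ * a₁₁ * b₇ + 2 * a₇ * a₉ * b₉ + a₇ * a₇ * b₁₁ + 2 * a₅ * a₁₁ * b₉ + 2 * a₅ * a₉ * b₁₁ + a₅ * a₅ * b₁₅) * X ^ 9 + C (R := ℂ) (2 * a₁₅ * b₇ + 2 * a₁₁ * b₁₁ + 2 * a₉ * a₁₁ + 2 * a₇ * b₁₅ + 2 * a₅ * a₁₅) * X ^ 10 + C (R := ℂ) (2 * a₉ * a₁₁ * b₇ + a₉ * a₉ * b₉ + 2 * a₇ * a₁₁ * b₉ + 2 * a₇ * a₉ * b₁₁ + 2 * a₅ * a₁₅ * b₇ + 2 * a₅ * a₁₁ * b₁₁ + 2 * a₅ * a₇ * b₁₅) * X ^ 11 + C (R := ℂ) (2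 * a₁₅ * b₉ + a₁₁ * a₁₁ + 2 * a₉ * b₁₅ + 2 * a₇ * a₁₅) * X ^ 12 + C (R := ℂ) (a₁₁ * a₁₁ * b₇ + 2 * a₉ * a₁₁ * b₉ + a₉ * a₉ * b₁₁ + 2 * a₇ * a₁₅ * b₇ + 2 * a₇ * a₁₁ * b₁₁ + a₇ * a₇ * b₁₅ + 2 * a₅ * a₁₅ * b₉ + 2 * a₅ * a₉ * b₁₅) * X ^ 13 + C (R := ℂ) (2 * a₁₅ * b₁₁ + 2 * a₁₁ * b₁₅ + 2 * a₉ * a₁₅) * X ^ 14 + C (R := ℂ) (a₁₁ * a₁₁ * b₉ + 2 * a₉ * a₁₅ * b₇ + 2 * a₉ * a₁₁ * b₁₁ + 2 * a₇ * a₁₅ * b₉ + 2 * a₇ * a₉ * b₁₅ + 2 * a₅ * a₁₅ * b₁₁ + 2 * a₅ * a₁₁ * b₁₅) * X ^ 15 + C (R := ℂ) (2 * a₁₁ * a₁₅) * X ^ 16 + C (R := ℂ) (2 * a₁₁ * a₁₅ * b₇ + a₁₁ * a₁₁ * b₁₁ + 2 * a₉ * a₁₅ * b₉ + a₉ * a₉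 * b₁₅ + 2 * a₇ * a₁₅ * b₁₁ + 2 * a₇ * a₁₁ * b₁₅) * X ^ 17 + C (R := ℂ) (2 * a₁₅ * b₁₅) * X ^ 18 + C (R := ℂ) (2 * a₁₁ * a₁₅ * b₉ + 2 * a₉ * a₁₅ * b₁₁ + 2 * a₉ * a₁₁ * b₁₅ + 2 * a₅ * a₁₅ * b₁₅) * X ^ 19 + C (R := ℂ) (a₁₅ * a₁₅) * X ^ 20 + C (R := ℂ) (a₁₅ * a₁₅ * b₇ + 2 * a₁₁ * a₁₅ * b₁₁ + a₁₁ * a₁₁ * b₁₅ + 2 * a₇ * a₁₅ * b₁₅) * X ^ 21 + C (R := ℂ) (a₁₅ * a₁₅ * b₉ + 2 * a₉ * a₁₅ * b₁₅) * X ^ 23 + C (R := ℂ) (a₁₅ * a₁₅ * b₁₁ + 2 * a₁₁ * a₁₅ * b₁₅) * X ^ 25 + C (R := ℂ) (a₁₅ * a₁₅ * b₁₅) * X ^ 29) := by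
  rw [hx, hy]
  simp only [map_mul, map_add, map_ofNat]
  ring
end Expansions

section Dvd
variable {x y z : PowerSeries ℂ}

lemma dX4 (a₅ a₇ a₉ a₁₁ a₁₅ : ℂ)
    (hx : x = X ^ 4 + C (R := ℂ) a₅ * X ^ 5 + C (R := ℂ) a₇ * X ^ 7 + C (R := ℂ) a₉ * X ^ 9 + C (R := ℂ) a₁₁ * X ^ 11 +
      C (R := ℂ) a₁₅ * X ^ 15) : (X : PowerSeries ℂ) ^ 4 ∣ x := by
  rw [PowerSeries.X_pow_dvd_iff]
  intro m hm
  interval_cases m <;> simp [hx, PowerSeries.coeff_X_pow]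

lemma dY6 (b₇ b₉ b₁₁ b₁₅ : ℂ)
    (hy : y = X ^ 6 + C (R := ℂ) b₇ * X ^ 7 + C (R := ℂ) b₉ * X ^ 9 + C (R := ℂ) b₁₁ * X ^ 11 + C (R := ℂ) b₁₅ * X ^ 15) :
    (X : PowerSeries ℂ) ^ 6 ∣ y := by
  rw [PowerSeries.X_pow_dvd_iff]
  intro m hm
  interval_cases m <;> simp [hy, PowerSeries.coeff_X_pow]

lemma dZ13 (c₁₅ : ℂ) (hz : z = X ^ 13 + C (R := ℂ) c₁₅ * X ^ 15) : (X : PowerSeries ℂ) ^ 13 ∣ z := by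
  rw [PowerSeries.X_pow_dvd_iff]
  intro m hm
  interval_cases m <;> simp [hz, PowerSeries.coeff_X_pow]

lemma dvd_weaken {a b : ℕ} {u : PowerSeries ℂ} (h : (X : PowerSeries ℂ) ^ a ∣ u) (hba : b ≤ a) :
    (X : PowerSeries ℂ) ^ b ∣ u := (pow_dvd_pow X hba).trans h

lemma dvd_mul' {a b : ℕ} {u v : PowerSeries ℂ} (hu : (X : PowerSeries ℂ) ^ a ∣ u)
    (hv : (X : PowerSeries ℂ) ^ b ∣ v) : (X : PowerSeries ℂ) ^ (a + b) ∣ u * v := by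
  rw [pow_add]; exact mul_dvd_mul hu hv

lemma hhigh {a b : ℕ} {u v : PowerSeries ℂ} (hu : (X : PowerSeries ℂ) ^ a ∣ u)
    (hv : (X : PowerSeries ℂ) ^ b ∣ v) (hab : 16 ≤ a + b) :
    (X : PowerSeries ℂ) ^ 16 ∣ u * v := dvd_weaken (dvd_mul' hu hv) hab

end Dvd

section Main
variable {x y z : PowerSeries ℂ}

lemma ord_mem (hsem : sgp (adjSet ![x, y, z] 16) =
      (AddSubmonoid.closure ({4, 6, 13} : Set ℕ) : Set ℕ))
    {s : PowerSeries ℂ} (hs : s ∈ adjSet ![x, y, z] 16) {n : ℕ} (hn : HasOrder s n) :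
    n = 0 ∨ n = 4 ∨ n = 6 ∨ n = 8 ∨ n = 10 ∨ n = 12 ∨ n = 13 ∨ n = 14 ∨ 16 ≤ n := by
  have h1 : n ∈ sgp (adjSet ![x, y, z] 16) := ⟨s, hs, hn⟩
  rw [hsem] at h1
  exact gammaP h1

lemma vanish_dvd (hsem : sgp (adjSet ![x, y, z] 16) =
      (AddSubmonoid.closure ({4, 6, 13} : Set ℕ) : Set ℕ))
    {s : PowerSeries ℂ} (hs : s ∈ adjSet ![x, y, z] 16)
    (h0 : coeff (R := ℂ) 0 s = 0) (h4 : coeff (R := ℂ) 4 s = 0) (h6 : coeff (R := ℂ) 6 s = 0)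
    (h8 : coeff (R := ℂ) 8 s = 0) (h10 : coeff (R := ℂ) 10 s = 0) (h12 : coeff (R := ℂ) 12 s = 0)
    (h13 : coeff (R := ℂ) 13 s = 0) (h14 : coeff (R := ℂ) 14 s = 0) : (X : PowerSeries ℂ) ^ 16 ∣ s := by
  classical
  rw [PowerSeries.X_pow_dvd_iff]
  by_contra hcon
  push_neg at hcon
  obtain ⟨m, hm16, hm⟩ := hcon
  have hex : ∃ k, coeff (R := ℂ) k s ≠ 0 := ⟨m, hm⟩
  have hord : HasOrder s (Nat.find hex) :=
    ⟨Nat.find_spec hex, fun k hk => not_not.mp (Nat.find_min hex hk)⟩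
  have hlt : Nat.find hex < 16 := lt_of_le_of_lt (Nat.find_min' hex hm) hm16
  obtain ⟨n, hord, hlt, hne⟩ : ∃ n, HasOrder s n ∧ n < 16 ∧ coeff (R := ℂ) n s ≠ 0 :=
    ⟨_, hord, hlt, hord.1⟩
  rcases ord_mem hsem hs hord with rfl | rfl | rfl | rfl | rfl | rfl | rfl | rfl | h
  exacts [hne h0, hne h4, hne h6, hne h8, hne h10, hne h12, hne h13, hne h14, by omega]

end Main
section Decompose
variable {x y z : PowerSeries ℂ}

lemma xS : x ∈ adjSet ![x, y, z] 16 := gen_mem_adjA ![x, y, z] 16 0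
lemma yS : y ∈ adjSet ![x, y, z] 16 := gen_mem_adjA ![x, y, z] 16 1
lemma zS : z ∈ adjSet ![x, y, z] 16 := gen_mem_adjA ![x, y, z] 16 2

lemma decompose (a₅ a₇ a₉ a₁₁ a₁₅ b₇ b₉ b₁₁ b₁₅ c₁₅ : ℂ)
    (hx : x = X ^ 4 + C (R := ℂ) a₅ * X ^ 5 + C (R := ℂ) a₇ * X ^ 7 + C (R := ℂ) a₉ * X ^ 9 + C (R := ℂ) a₁₁ * X ^ 11 +
      C (R := ℂ) a₁₅ * X ^ 15)
    (hy : y = X ^ 6 + C (R := ℂ) b₇ * X ^ 7 + C (R := ℂ) b₉ * X ^ 9 + C (R := ℂ) b₁₁ * X ^ 11 + C (R := ℂ) b₁₅ * X ^ 15)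
    (hz : z = X ^ 13 + C (R := ℂ) c₁₅ * X ^ 15)
    (hsem : sgp (adjSet ![x, y, z] 16) =
      (AddSubmonoid.closure ({4, 6, 13} : Set ℕ) : Set ℕ))
    {s : PowerSeries ℂ} (hs : s ∈ adjSet ![x, y, z] 16) (h0 : coeff (R := ℂ) 0 s = 0) :
    ∃ (c₁ c₂ c₃ c₄ c₅ c₆ c₇ : ℂ) (h : PowerSeries ℂ),
      s = c₁ • x + c₂ • y + c₃ • x ^ 2 + c₄ • (x * y) + c₅ • x ^ 3 + c₆ • z +
        c₇ • (x ^ 2 * y) + X ^ 16 * h := by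
  have Ex2 := ex2 a₅ a₇ a₉ a₁₁ a₁₅ x hx
  have Exy := exy a₅ a₇ a₉ a₁₁ a₁₅ b₇ b₉ b₁₁ b₁₅ x y hx hy
  have Ex3 := ex3 a₅ a₇ a₉ a₁₁ a₁₅ x hx
  have Ex2y := ex2y a₅ a₇ a₉ a₁₁ a₁₅ b₇ b₉ b₁₁ b₁₅ x y hx hy
  have dx := dX4 a₅ a₇ a₉ a₁₁ a₁₅ hx
  have dy := dY6 b₇ b₉ b₁₁ b₁₅ hy
  have dz := dZ13 c₁₅ hz
  have dx2 : (X : PowerSeries ℂ) ^ 8 ∣ x ^ 2 := by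
    have h := pow_dvd_pow_of_dvd dx 2; norm_num [← pow_mul] at h; exact h
  have dx3 : (X : PowerSeries ℂ) ^ 12 ∣ x ^ 3 := by
    have h := pow_dvd_pow_of_dvd dx 3; norm_num [← pow_mul] at h; exact h
  have dxy : (X : PowerSeries ℂ) ^ 10 ∣ x * y := by
    have h := dvd_mul' dx dy; norm_num at h; exact h
  have dx2y : (X : PowerSeries ℂ) ^ 14 ∣ x ^ 2 * y := by
    have h := dvd_mul' dx2 dy; norm_num at h; exact h
  have zx := PowerSeries.X_pow_dvd_iff.mp dx
  have zy := PowerSeries.X_pow_dvd_iff.mp dy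
  have zz := PowerSeries.X_pow_dvd_iff.mp dz
  have zx2 := PowerSeries.X_pow_dvd_iff.mp dx2
  have zx3 := PowerSeries.X_pow_dvd_iff.mp dx3
  have zxy := PowerSeries.X_pow_dvd_iff.mp dxy
  have zx2y := PowerSeries.X_pow_dvd_iff.mp dx2y
  have l1 : coeff (R := ℂ) 4 x = 1 := by simp [hx, PowerSeries.coeff_X_pow]
  have l2 : coeff (R := ℂ) 6 y = 1 := by simp [hy, PowerSeries.coeff_X_pow]
  have l3 : coeff (R := ℂ) 8 (x ^ 2) = 1 := by
    rw [Ex2, map_add, coeff_X16_mul 8 (by norm_num)]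
    simp [PowerSeries.coeff_X_pow, PowerSeries.coeff_C_mul, add_mul, mul_assoc]
  have l4 : coeff (R := ℂ) 10 (x * y) = 1 := by
    rw [Exy, map_add, coeff_X16_mul 10 (by norm_num)]
    simp [PowerSeries.coeff_X_pow, PowerSeries.coeff_C_mul, add_mul, mul_assoc]
  have l5 : coeff (R := ℂ) 12 (x ^ 3) = 1 := by
    rw [Ex3, map_add, coeff_X16_mul 12 (by norm_num)]
    simp [PowerSeries.coeff_X_pow, PowerSeries.coeff_C_mul, add_mul, mul_assoc]
  have l6 : coeff (R := ℂ) 13 z = 1 := by simp [hz, PowerSeries.coeff_X_pow]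
  have l7 : coeff (R := ℂ) 14 (x ^ 2 * y) = 1 := by
    rw [Ex2y, map_add, coeff_X16_mul 14 (by norm_num)]
    simp [PowerSeries.coeff_X_pow, PowerSeries.coeff_C_mul, add_mul, mul_assoc]
  set c1 := coeff (R := ℂ) 4 s with hc1
  set t1 := s - c1 • x with ht1
  set c2 := coeff (R := ℂ) 6 t1 with hc2
  set t2 := t1 - c2 • y with ht2
  set c3 := coeff (R := ℂ) 8 t2 with hc3
  set t3 := t2 - c3 • x ^ 2 with ht3
  set c4 := coeff (R := ℂ) 10 t3 with hc4
  set t4 := t3 - c4 • (x * y) with ht4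
  set c5 := coeff (R := ℂ) 12 t4 with hc5
  set t5 := t4 - c5 • x ^ 3 with ht5
  set c6 := coeff (R := ℂ) 13 t5 with hc6
  set t6 := t5 - c6 • z with ht6
  set c7 := coeff (R := ℂ) 14 t6 with hc7
  set t7 := t6 - c7 • (x ^ 2 * y) with ht7
  have H0 : coeff (R := ℂ) 0 t7 = 0 := by
    simp only [ht7, hc7, ht6, hc6, ht5, hc5, ht4, hc4, ht3, hc3, ht2, hc2, ht1, hc1,
      map_sub, PowerSeries.coeff_smul, smul_eq_mul, h0,
      zx 0 (by norm_num), zy 0 (by norm_num), zx2 0 (by norm_num), zxy 0 (by norm_num),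
      zx3 0 (by norm_num), zz 0 (by norm_num), zx2y 0 (by norm_num)]
    ring
  have H4 : coeff (R := ℂ) 4 t7 = 0 := by
    simp only [ht7, hc7, ht6, hc6, ht5, hc5, ht4, hc4, ht3, hc3, ht2, hc2, ht1, hc1,
      map_sub, PowerSeries.coeff_smul, smul_eq_mul, l1,
      zy 4 (by norm_num), zx2 4 (by norm_num), zxy 4 (by norm_num),
      zx3 4 (by norm_num), zz 4 (by norm_num), zx2y 4 (by norm_num)]
    ring
  have H6 : coeff (R := ℂ) 6 t7 = 0 := by
    simp only [ht7, hc7, ht6, hc6, ht5, hc5, ht4, hc4, ht3, hc3, ht2, hc2, ht1, hc1,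
      map_sub, PowerSeries.coeff_smul, smul_eq_mul, l2,
      zx2 6 (by norm_num), zxy 6 (by norm_num),
      zx3 6 (by norm_num), zz 6 (by norm_num), zx2y 6 (by norm_num)]
    ring
  have H8 : coeff (R := ℂ) 8 t7 = 0 := by
    simp only [ht7, hc7, ht6, hc6, ht5, hc5, ht4, hc4, ht3, hc3, ht2, hc2, ht1, hc1,
      map_sub, PowerSeries.coeff_smul, smul_eq_mul, l3,
      zxy 8 (by norm_num), zx3 8 (by norm_num), zz 8 (by norm_num), zx2y 8 (by norm_num)]
    ring
  have H10 : coeff (R := ℂ) 10 t7 = 0 := by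
    simp only [ht7, hc7, ht6, hc6, ht5, hc5, ht4, hc4, ht3, hc3, ht2, hc2, ht1, hc1,
      map_sub, PowerSeries.coeff_smul, smul_eq_mul, l4,
      zx3 10 (by norm_num), zz 10 (by norm_num), zx2y 10 (by norm_num)]
    ring
  have H12 : coeff (R := ℂ) 12 t7 = 0 := by
    simp only [ht7, hc7, ht6, hc6, ht5, hc5, ht4, hc4, ht3, hc3, ht2, hc2, ht1, hc1,
      map_sub, PowerSeries.coeff_smul, smul_eq_mul, l5,
      zz 12 (by norm_num), zx2y 12 (by norm_num)]
    ring
  have H13 : coeff (R := ℂ) 13 t7 = 0 := by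
    simp only [ht7, hc7, ht6, hc6, ht5, hc5, ht4, hc4, ht3, hc3, ht2, hc2, ht1, hc1,
      map_sub, PowerSeries.coeff_smul, smul_eq_mul, l6, zx2y 13 (by norm_num)]
    ring
  have H14 : coeff (R := ℂ) 14 t7 = 0 := by
    simp only [ht7, hc7, ht6, hc6, ht5, hc5, ht4, hc4, ht3, hc3, ht2, hc2, ht1, hc1,
      map_sub, PowerSeries.coeff_smul, smul_eq_mul, l7]
    ring
  have hxA : x ∈ adjA ![x, y, z] 16 := gen_mem_adjA ![x, y, z] 16 0
  have hyA : y ∈ adjA ![x, y, z] 16 := gen_mem_adjA ![x, y, z] 16 1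
  have hzA : z ∈ adjA ![x, y, z] 16 := gen_mem_adjA ![x, y, z] 16 2
  have hsA : s ∈ adjA ![x, y, z] 16 := hs
  have hmem : t7 ∈ adjSet ![x, y, z] 16 := by
    show t7 ∈ adjA ![x, y, z] 16
    rw [ht7, ht6, ht5, ht4, ht3, ht2, ht1]
    exact sub_mem (sub_mem (sub_mem (sub_mem (sub_mem (sub_mem (sub_mem hsA
      (Subalgebra.smul_mem _ hxA c1)) (Subalgebra.smul_mem _ hyA c2))
      (Subalgebra.smul_mem _ (pow_mem hxA 2) c3))
      (Subalgebra.smul_mem _ (mul_mem hxA hyA) c4))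
      (Subalgebra.smul_mem _ (pow_mem hxA 3) c5))
      (Subalgebra.smul_mem _ hzA c6))
      (Subalgebra.smul_mem _ (mul_mem (pow_mem hxA 2) hyA) c7)
  obtain ⟨h, hh⟩ := vanish_dvd hsem hmem H0 H4 H6 H8 H10 H12 H13 H14
  refine ⟨c1, c2, c3, c4, c5, c6, c7, h, ?_⟩
  rw [← hh, ht7, ht6, ht5, ht4, ht3, ht2, ht1]
  module

end Decompose
lemma cx2_8 (a₅ a₇ a₉ a₁₁ a₁₅ : ℂ) {x : PowerSeries ℂ}
    (hx : x = X ^ 4 + C (R := ℂ) a₅ * X ^ 5 + C (R := ℂ) a₇ * X ^ 7 + C (R := ℂ) a₉ * X ^ 9 + C (R := ℂ) a₁₁ * X ^ 11 +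
      C (R := ℂ) a₁₅ * X ^ 15) :
    coeff (R := ℂ) 8 (x ^ 2) = 1 := by
  rw [ex2 a₅ a₇ a₉ a₁₁ a₁₅ x hx, map_add, coeff_X16_mul 8 (by norm_num)]
  simp [PowerSeries.coeff_X_pow, PowerSeries.coeff_C_mul, add_mul, mul_assoc]

lemma cx2_10 (a₅ a₇ a₉ a₁₁ a₁₅ : ℂ) {x : PowerSeries ℂ}
    (hx : x = X ^ 4 + C (R := ℂ) a₅ * X ^ 5 + C (R := ℂ) a₇ * X ^ 7 + C (R := ℂ) a₉ * X ^ 9 + C (R := ℂ) a₁₁ * X ^ 11 +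
      C (R := ℂ) a₁₅ * X ^ 15) :
    coeff (R := ℂ) 10 (x ^ 2) = a₅ * a₅ := by
  rw [ex2 a₅ a₇ a₉ a₁₁ a₁₅ x hx, map_add, coeff_X16_mul 10 (by norm_num)]
  simp [PowerSeries.coeff_X_pow, PowerSeries.coeff_C_mul, add_mul, mul_assoc]

lemma cx2_12 (a₅ a₇ a₉ a₁₁ a₁₅ : ℂ) {x : PowerSeries ℂ}
    (hx : x = X ^ 4 + C (R := ℂ) a₅ * X ^ 5 + C (R := ℂ) a₇ * X ^ 7 + C (R := ℂ) a₉ * X ^ 9 + C (R := ℂ) a₁₁ * X ^ 11 +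
      C (R := ℂ) a₁₅ * X ^ 15) :
    coeff (R := ℂ) 12 (x ^ 2) = 2 * a₅ * a₇ := by
  rw [ex2 a₅ a₇ a₉ a₁₁ a₁₅ x hx, map_add, coeff_X16_mul 12 (by norm_num)]
  simp [PowerSeries.coeff_X_pow, PowerSeries.coeff_C_mul, add_mul, mul_assoc]

lemma cx2_13 (a₅ a₇ a₉ a₁₁ a₁₅ : ℂ) {x : PowerSeries ℂ}
    (hx : x = X ^ 4 + C (R := ℂ) a₅ * X ^ 5 + C (R := ℂ) a₇ * X ^ 7 + C (R := ℂ) a₉ * X ^ 9 + C (R := ℂ) a₁₁ * X ^ 11 +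
      C (R := ℂ) a₁₅ * X ^ 15) :
    coeff (R := ℂ) 13 (x ^ 2) = 2 * a₉ := by
  rw [ex2 a₅ a₇ a₉ a₁₁ a₁₅ x hx, map_add, coeff_X16_mul 13 (by norm_num)]
  simp [PowerSeries.coeff_X_pow, PowerSeries.coeff_C_mul, add_mul, mul_assoc]

lemma cx2_14 (a₅ a₇ a₉ a₁₁ a₁₅ : ℂ) {x : PowerSeries ℂ}
    (hx : x = X ^ 4 + C (R := ℂ) a₅ * X ^ 5 + C (R := ℂ) a₇ * X ^ 7 + C (R := ℂ) a₉ * X ^ 9 + C (R := ℂ) a₁₁ * X ^ 11 +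
      C (R := ℂ) a₁₅ * X ^ 15) :
    coeff (R := ℂ) 14 (x ^ 2) = a₇ * a₇ + 2 * a₅ * a₉ := by
  rw [ex2 a₅ a₇ a₉ a₁₁ a₁₅ x hx, map_add, coeff_X16_mul 14 (by norm_num)]
  simp [PowerSeries.coeff_X_pow, PowerSeries.coeff_C_mul, add_mul, mul_assoc]

lemma cxy_10 (a₅ a₇ a₉ a₁₁ a₁₅ b₇ b₉ b₁₁ b₁₅ : ℂ) {x y : PowerSeries ℂ}
    (hx : x = X ^ 4 + C (R := ℂ) a₅ * X ^ 5 + C (R := ℂ) a₇ * X ^ 7 + C (R := ℂ) a₉ * X ^ 9 + C (R := ℂ) a₁₁ * X ^ 11 +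
      C (R := ℂ) a₁₅ * X ^ 15)
    (hy : y = X ^ 6 + C (R := ℂ) b₇ * X ^ 7 + C (R := ℂ) b₉ * X ^ 9 + C (R := ℂ) b₁₁ * X ^ 11 + C (R := ℂ) b₁₅ * X ^ 15) :
    coeff (R := ℂ) 10 (x * y) = 1 := by
  rw [exy a₅ a₇ a₉ a₁₁ a₁₅ b₇ b₉ b₁₁ b₁₅ x y hx hy, map_add, coeff_X16_mul 10 (by norm_num)]
  simp [PowerSeries.coeff_X_pow, PowerSeries.coeff_C_mul, add_mul, mul_assoc]

lemma cxy_12 (a₅ a₇ a₉ a₁₁ a₁₅ b₇ b₉ b₁₁ b₁₅ : ℂ) {x y : PowerSeries ℂ}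
    (hx : x = X ^ 4 + C (R := ℂ) a₅ * X ^ 5 + C (R := ℂ) a₇ * X ^ 7 + C (R := ℂ) a₉ * X ^ 9 + C (R := ℂ) a₁₁ * X ^ 11 +
      C (R := ℂ) a₁₅ * X ^ 15)
    (hy : y = X ^ 6 + C (R := ℂ) b₇ * X ^ 7 + C (R := ℂ) b₉ * X ^ 9 + C (R := ℂ) b₁₁ * X ^ 11 + C (R := ℂ) b₁₅ * X ^ 15) :
    coeff (R := ℂ) 12 (x * y) = a₅ * b₇ := by
  rw [exy a₅ a₇ a₉ a₁₁ a₁₅ b₇ b₉ b₁₁ b₁₅ x y hx hy, map_add, coeff_X16_mul 12 (by norm_num)]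
  simp [PowerSeries.coeff_X_pow, PowerSeries.coeff_C_mul, add_mul, mul_assoc]

lemma cxy_13 (a₅ a₇ a₉ a₁₁ a₁₅ b₇ b₉ b₁₁ b₁₅ : ℂ) {x y : PowerSeries ℂ}
    (hx : x = X ^ 4 + C (R := ℂ) a₅ * X ^ 5 + C (R := ℂ) a₇ * X ^ 7 + C (R := ℂ) a₉ * X ^ 9 + C (R := ℂ) a₁₁ * X ^ 11 +
      C (R := ℂ) a₁₅ * X ^ 15)
    (hy : y = X ^ 6 + C (R := ℂ) b₇ * X ^ 7 + C (R := ℂ) b₉ * X ^ 9 + C (R := ℂ) b₁₁ * X ^ 11 + C (R := ℂ) b₁₅ * X ^ 15) :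
    coeff (R := ℂ) 13 (x * y) = b₉ + a₇ := by
  rw [exy a₅ a₇ a₉ a₁₁ a₁₅ b₇ b₉ b₁₁ b₁₅ x y hx hy, map_add, coeff_X16_mul 13 (by norm_num)]
  simp [PowerSeries.coeff_X_pow, PowerSeries.coeff_C_mul, add_mul, mul_assoc]

lemma cx3_12 (a₅ a₇ a₉ a₁₁ a₁₅ : ℂ) {x : PowerSeries ℂ}
    (hx : x = X ^ 4 + C (R := ℂ) a₅ * X ^ 5 + C (R := ℂ) a₇ * X ^ 7 + C (R := ℂ) a₉ * X ^ 9 + C (R := ℂ) a₁₁ * X ^ 11 +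
      C (R := ℂ) a₁₅ * X ^ 15) :
    coeff (R := ℂ) 12 (x ^ 3) = 1 := by
  rw [ex3 a₅ a₇ a₉ a₁₁ a₁₅ x hx, map_add, coeff_X16_mul 12 (by norm_num)]
  simp [PowerSeries.coeff_X_pow, PowerSeries.coeff_C_mul, add_mul, mul_assoc]

lemma cx3_13 (a₅ a₇ a₉ a₁₁ a₁₅ : ℂ) {x : PowerSeries ℂ}
    (hx : x = X ^ 4 + C (R := ℂ) a₅ * X ^ 5 + C (R := ℂ) a₇ * X ^ 7 + C (R := ℂ) a₉ * X ^ 9 + C (R := ℂ) a₁₁ * X ^ 11 +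
      C (R := ℂ) a₁₅ * X ^ 15) :
    coeff (R := ℂ) 13 (x ^ 3) = 3 * a₅ := by
  rw [ex3 a₅ a₇ a₉ a₁₁ a₁₅ x hx, map_add, coeff_X16_mul 13 (by norm_num)]
  simp [PowerSeries.coeff_X_pow, PowerSeries.coeff_C_mul, add_mul, mul_assoc]

lemma cx3_14 (a₅ a₇ a₉ a₁₁ a₁₅ : ℂ) {x : PowerSeries ℂ}
    (hx : x = X ^ 4 + C (R := ℂ) a₅ * X ^ 5 + C (R := ℂ) a₇ * X ^ 7 + C (R := ℂ) a₉ * X ^ 9 + C (R := ℂ) a₁₁ * X ^ 11 +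
      C (R := ℂ) a₁₅ * X ^ 15) :
    coeff (R := ℂ) 14 (x ^ 3) = 3 * a₅ * a₅ := by
  rw [ex3 a₅ a₇ a₉ a₁₁ a₁₅ x hx, map_add, coeff_X16_mul 14 (by norm_num)]
  simp [PowerSeries.coeff_X_pow, PowerSeries.coeff_C_mul, add_mul, mul_assoc]

lemma cx3_15 (a₅ a₇ a₉ a₁₁ a₁₅ : ℂ) {x : PowerSeries ℂ}
    (hx : x = X ^ 4 + C (R := ℂ) a₅ * X ^ 5 + C (R := ℂ) a₇ * X ^ 7 + C (R := ℂ) a₉ * X ^ 9 + C (R := ℂ) a₁₁ * X ^ 11 +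
      C (R := ℂ) a₁₅ * X ^ 15) :
    coeff (R := ℂ) 15 (x ^ 3) = 3 * a₇ + a₅ * a₅ * a₅ := by
  rw [ex3 a₅ a₇ a₉ a₁₁ a₁₅ x hx, map_add, coeff_X16_mul 15 (by norm_num)]
  simp [PowerSeries.coeff_X_pow, PowerSeries.coeff_C_mul, add_mul, mul_assoc]

lemma cy2_12 (b₇ b₉ b₁₁ b₁₅ : ℂ) {y : PowerSeries ℂ}
    (hy : y = X ^ 6 + C (R := ℂ) b₇ * X ^ 7 + C (R := ℂ) b₉ * X ^ 9 + C (R := ℂ) b₁₁ * X ^ 11 + C (R := ℂ) b₁₅ * X ^ 15) :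
    coeff (R := ℂ) 12 (y ^ 2) = 1 := by
  rw [ey2 b₇ b₉ b₁₁ b₁₅ y hy, map_add, coeff_X16_mul 12 (by norm_num)]
  simp [PowerSeries.coeff_X_pow, PowerSeries.coeff_C_mul, add_mul, mul_assoc]

lemma cy2_13 (b₇ b₉ b₁₁ b₁₅ : ℂ) {y : PowerSeries ℂ}
    (hy : y = X ^ 6 + C (R := ℂ) b₇ * X ^ 7 + C (R := ℂ) b₉ * X ^ 9 + C (R := ℂ) b₁₁ * X ^ 11 + C (R := ℂ) b₁₅ * X ^ 15) :
    coeff (R := ℂ) 13 (y ^ 2) = 2 * b₇ := by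
  rw [ey2 b₇ b₉ b₁₁ b₁₅ y hy, map_add, coeff_X16_mul 13 (by norm_num)]
  simp [PowerSeries.coeff_X_pow, PowerSeries.coeff_C_mul, add_mul, mul_assoc]

lemma cy2_14 (b₇ b₉ b₁₁ b₁₅ : ℂ) {y : PowerSeries ℂ}
    (hy : y = X ^ 6 + C (R := ℂ) b₇ * X ^ 7 + C (R := ℂ) b₉ * X ^ 9 + C (R := ℂ) b₁₁ * X ^ 11 + C (R := ℂ) b₁₅ * X ^ 15) :
    coeff (R := ℂ) 14 (y ^ 2) = b₇ * b₇ := by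
  rw [ey2 b₇ b₉ b₁₁ b₁₅ y hy, map_add, coeff_X16_mul 14 (by norm_num)]
  simp [PowerSeries.coeff_X_pow, PowerSeries.coeff_C_mul, add_mul, mul_assoc]

lemma cy2_15 (b₇ b₉ b₁₁ b₁₅ : ℂ) {y : PowerSeries ℂ}
    (hy : y = X ^ 6 + C (R := ℂ) b₇ * X ^ 7 + C (R := ℂ) b₉ * X ^ 9 + C (R := ℂ) b₁₁ * X ^ 11 + C (R := ℂ) b₁₅ * X ^ 15) :
    coeff (R := ℂ) 15 (y ^ 2) = 2 * b₉ := by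
  rw [ey2 b₇ b₉ b₁₁ b₁₅ y hy, map_add, coeff_X16_mul 15 (by norm_num)]
  simp [PowerSeries.coeff_X_pow, PowerSeries.coeff_C_mul, add_mul, mul_assoc]

lemma cx2y_13 (a₅ a₇ a₉ a₁₁ a₁₅ b₇ b₉ b₁₁ b₁₅ : ℂ) {x y : PowerSeries ℂ}
    (hx : x = X ^ 4 + C (R := ℂ) a₅ * X ^ 5 + C (R := ℂ) a₇ * X ^ 7 + C (R := ℂ) a₉ * X ^ 9 + C (R := ℂ) a₁₁ * X ^ 11 +
      C (R := ℂ) a₁₅ * X ^ 15)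
    (hy : y = X ^ 6 + C (R := ℂ) b₇ * X ^ 7 + C (R := ℂ) b₉ * X ^ 9 + C (R := ℂ) b₁₁ * X ^ 11 + C (R := ℂ) b₁₅ * X ^ 15) :
    coeff (R := ℂ) 13 (x ^ 2 * y) = 0 := by
  rw [ex2y a₅ a₇ a₉ a₁₁ a₁₅ b₇ b₉ b₁₁ b₁₅ x y hx hy, map_add, coeff_X16_mul 13 (by norm_num)]
  simp [PowerSeries.coeff_X_pow, PowerSeries.coeff_C_mul, add_mul, mul_assoc]

lemma cx2y_14 (a₅ a₇ a₉ a₁₁ a₁₅ b₇ b₉ b₁₁ b₁₅ : ℂ) {x y : PowerSeries ℂ}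
    (hx : x = X ^ 4 + C (R := ℂ) a₅ * X ^ 5 + C (R := ℂ) a₇ * X ^ 7 + C (R := ℂ) a₉ * X ^ 9 + C (R := ℂ) a₁₁ * X ^ 11 +
      C (R := ℂ) a₁₅ * X ^ 15)
    (hy : y = X ^ 6 + C (R := ℂ) b₇ * X ^ 7 + C (R := ℂ) b₉ * X ^ 9 + C (R := ℂ) b₁₁ * X ^ 11 + C (R := ℂ) b₁₅ * X ^ 15) :
    coeff (R := ℂ) 14 (x ^ 2 * y) = 1 := by
  rw [ex2y a₅ a₇ a₉ a₁₁ a₁₅ b₇ b₉ b₁₁ b₁₅ x y hx hy, map_add, coeff_X16_mul 14 (by norm_num)]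
  simp [PowerSeries.coeff_X_pow, PowerSeries.coeff_C_mul, add_mul, mul_assoc]

lemma cx2y_15 (a₅ a₇ a₉ a₁₁ a₁₅ b₇ b₉ b₁₁ b₁₅ : ℂ) {x y : PowerSeries ℂ}
    (hx : x = X ^ 4 + C (R := ℂ) a₅ * X ^ 5 + C (R := ℂ) a₇ * X ^ 7 + C (R := ℂ) a₉ * X ^ 9 + C (R := ℂ) a₁₁ * X ^ 11 +
      C (R := ℂ) a₁₅ * X ^ 15)
    (hy : y = X ^ 6 + C (R := ℂ) b₇ * X ^ 7 + C (R := ℂ) b₉ * X ^ 9 + C (R := ℂ) b₁₁ * X ^ 11 + C (R := ℂ) b₁₅ * X ^ 15) :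
    coeff (R := ℂ) 15 (x ^ 2 * y) = b₇ + 2 * a₅ := by
  rw [ex2y a₅ a₇ a₉ a₁₁ a₁₅ b₇ b₉ b₁₁ b₁₅ x y hx hy, map_add, coeff_X16_mul 15 (by norm_num)]
  simp [PowerSeries.coeff_X_pow, PowerSeries.coeff_C_mul, add_mul, mul_assoc]
section PartA
variable {x y z : PowerSeries ℂ}

lemma dY2 (b₇ b₉ b₁₁ b₁₅ : ℂ)
    (hy : y = X ^ 6 + C (R := ℂ) b₇ * X ^ 7 + C (R := ℂ) b₉ * X ^ 9 + C (R := ℂ) b₁₁ * X ^ 11 + C (R := ℂ) b₁₅ * X ^ 15) :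
    (X : PowerSeries ℂ) ^ 12 ∣ y ^ 2 := by
  have h := pow_dvd_pow_of_dvd (dY6 b₇ b₉ b₁₁ b₁₅ hy) 2
  norm_num [← pow_mul] at h; exact h

lemma dX3 (a₅ a₇ a₉ a₁₁ a₁₅ : ℂ)
    (hx : x = X ^ 4 + C (R := ℂ) a₅ * X ^ 5 + C (R := ℂ) a₇ * X ^ 7 + C (R := ℂ) a₉ * X ^ 9 + C (R := ℂ) a₁₁ * X ^ 11 +
      C (R := ℂ) a₁₅ * X ^ 15) : (X : PowerSeries ℂ) ^ 12 ∣ x ^ 3 := by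
  have h := pow_dvd_pow_of_dvd (dX4 a₅ a₇ a₉ a₁₁ a₁₅ hx) 3
  norm_num [← pow_mul] at h; exact h

lemma dX2 (a₅ a₇ a₉ a₁₁ a₁₅ : ℂ)
    (hx : x = X ^ 4 + C (R := ℂ) a₅ * X ^ 5 + C (R := ℂ) a₇ * X ^ 7 + C (R := ℂ) a₉ * X ^ 9 + C (R := ℂ) a₁₁ * X ^ 11 +
      C (R := ℂ) a₁₅ * X ^ 15) : (X : PowerSeries ℂ) ^ 8 ∣ x ^ 2 := by
  have h := pow_dvd_pow_of_dvd (dX4 a₅ a₇ a₉ a₁₁ a₁₅ hx) 2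
  norm_num [← pow_mul] at h; exact h

lemma dXY (a₅ a₇ a₉ a₁₁ a₁₅ b₇ b₉ b₁₁ b₁₅ : ℂ)
    (hx : x = X ^ 4 + C (R := ℂ) a₅ * X ^ 5 + C (R := ℂ) a₇ * X ^ 7 + C (R := ℂ) a₉ * X ^ 9 + C (R := ℂ) a₁₁ * X ^ 11 +
      C (R := ℂ) a₁₅ * X ^ 15)
    (hy : y = X ^ 6 + C (R := ℂ) b₇ * X ^ 7 + C (R := ℂ) b₉ * X ^ 9 + C (R := ℂ) b₁₁ * X ^ 11 + C (R := ℂ) b₁₅ * X ^ 15) :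
    (X : PowerSeries ℂ) ^ 10 ∣ x * y := by
  have h := dvd_mul' (dX4 a₅ a₇ a₉ a₁₁ a₁₅ hx) (dY6 b₇ b₉ b₁₁ b₁₅ hy)
  norm_num at h; exact h

lemma dX2Y (a₅ a₇ a₉ a₁₁ a₁₅ b₇ b₉ b₁₁ b₁₅ : ℂ)
    (hx : x = X ^ 4 + C (R := ℂ) a₅ * X ^ 5 + C (R := ℂ) a₇ * X ^ 7 + C (R := ℂ) a₉ * X ^ 9 + C (R := ℂ) a₁₁ * X ^ 11 +
      C (R := ℂ) a₁₅ * X ^ 15)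
    (hy : y = X ^ 6 + C (R := ℂ) b₇ * X ^ 7 + C (R := ℂ) b₉ * X ^ 9 + C (R := ℂ) b₁₁ * X ^ 11 + C (R := ℂ) b₁₅ * X ^ 15) :
    (X : PowerSeries ℂ) ^ 14 ∣ x ^ 2 * y := by
  have h := dvd_mul' (dX2 a₅ a₇ a₉ a₁₁ a₁₅ hx) (dY6 b₇ b₉ b₁₁ b₁₅ hy)
  norm_num at h; exact h

lemma ord13_iff (a₅ a₇ a₉ a₁₁ a₁₅ b₇ b₉ b₁₁ b₁₅ : ℂ)
    (hx : x = X ^ 4 + C (R := ℂ) a₅ * X ^ 5 + C (R := ℂ) a₇ * X ^ 7 + C (R := ℂ) a₉ * X ^ 9 + C (R := ℂ) a₁₁ * X ^ 11 +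
      C (R := ℂ) a₁₅ * X ^ 15)
    (hy : y = X ^ 6 + C (R := ℂ) b₇ * X ^ 7 + C (R := ℂ) b₉ * X ^ 9 + C (R := ℂ) b₁₁ * X ^ 11 + C (R := ℂ) b₁₅ * X ^ 15) :
    HasOrder (y ^ 2 - x ^ 3) 13 ↔ 2 * b₇ - 3 * a₅ ≠ 0 := by
  have c13 : coeff (R := ℂ) 13 (y ^ 2 - x ^ 3) = 2 * b₇ - 3 * a₅ := by
    rw [map_sub, cy2_13 b₇ b₉ b₁₁ b₁₅ hy, cx3_13 a₅ a₇ a₉ a₁₁ a₁₅ hx]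
  have low : ∀ m < 13, coeff (R := ℂ) m (y ^ 2 - x ^ 3) = 0 := by
    have dy2 := dY2 b₇ b₉ b₁₁ b₁₅ hy
    have dx3 := dX3 a₅ a₇ a₉ a₁₁ a₁₅ hx
    intro m hm
    rcases Nat.lt_or_ge m 12 with h | h
    · rw [map_sub, PowerSeries.X_pow_dvd_iff.mp dy2 m h, PowerSeries.X_pow_dvd_iff.mp dx3 m h,
        sub_zero]
    · have hm12 : m = 12 := by omega
      subst hm12
      rw [map_sub, cy2_12 b₇ b₉ b₁₁ b₁₅ hy, cx3_12 a₅ a₇ a₉ a₁₁ a₁₅ hx, sub_self]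
  constructor
  · intro h
    rw [← c13]; exact h.1
  · intro hd
    exact ⟨by rw [c13]; exact hd, low⟩

lemma partA (a₅ a₇ a₉ a₁₁ a₁₅ b₇ b₉ b₁₁ b₁₅ c₁₅ : ℂ)
    (hx : x = X ^ 4 + C (R := ℂ) a₅ * X ^ 5 + C (R := ℂ) a₇ * X ^ 7 + C (R := ℂ) a₉ * X ^ 9 + C (R := ℂ) a₁₁ * X ^ 11 +
      C (R := ℂ) a₁₅ * X ^ 15)
    (hy : y = X ^ 6 + C (R := ℂ) b₇ * X ^ 7 + C (R := ℂ) b₉ * X ^ 9 + C (R := ℂ) b₁₁ * X ^ 11 + C (R := ℂ) b₁₅ * X ^ 15)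
    (hz : z = X ^ 13 + C (R := ℂ) c₁₅ * X ^ 15)
    (hsem : sgp (adjSet ![x, y, z] 16) =
      (AddSubmonoid.closure ({4, 6, 13} : Set ℕ) : Set ℕ))
    (hd : 2 * b₇ - 3 * a₅ ≠ 0) :
    adjSet ![x, y, z] 16 = adjSet ![x, y] 16 := by
  have dy2 := dY2 b₇ b₉ b₁₁ b₁₅ hy
  have dx3 := dX3 a₅ a₇ a₉ a₁₁ a₁₅ hx
  have dx2y := dX2Y a₅ a₇ a₉ a₁₁ a₁₅ b₇ b₉ b₁₁ b₁₅ hx hy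
  have dz := dZ13 c₁₅ hz
  set e := b₇ * b₇ - 3 * (a₅ * a₅) with he
  set q := y ^ 2 - x ^ 3 - C (R := ℂ) e * (x ^ 2 * y) with hq
  have zx2y := PowerSeries.X_pow_dvd_iff.mp dx2y
  have dq12 : (X : PowerSeries ℂ) ^ 12 ∣ q :=
    dvd_sub (dvd_sub dy2 dx3) ((dvd_weaken dx2y (by norm_num)).mul_left _)
  have cq12 : coeff (R := ℂ) 12 q = 0 := by
    rw [hq, map_sub, map_sub, PowerSeries.coeff_C_mul, cy2_12 b₇ b₉ b₁₁ b₁₅ hy,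
      cx3_12 a₅ a₇ a₉ a₁₁ a₁₅ hx, zx2y 12 (by norm_num)]
    ring
  have cq13 : coeff (R := ℂ) 13 q = 2 * b₇ - 3 * a₅ := by
    rw [hq, map_sub, map_sub, PowerSeries.coeff_C_mul, cy2_13 b₇ b₉ b₁₁ b₁₅ hy,
      cx3_13 a₅ a₇ a₉ a₁₁ a₁₅ hx, cx2y_13 a₅ a₇ a₉ a₁₁ a₁₅ b₇ b₉ b₁₁ b₁₅ hx hy]
    ring
  have cq14 : coeff (R := ℂ) 14 q = 0 := by
    rw [hq, map_sub, map_sub, PowerSeries.coeff_C_mul, cy2_14 b₇ b₉ b₁₁ b₁₅ hy,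
      cx3_14 a₅ a₇ a₉ a₁₁ a₁₅ hx, cx2y_14 a₅ a₇ a₉ a₁₁ a₁₅ b₇ b₉ b₁₁ b₁₅ hx hy, he]
    ring
  set s := z - C (R := ℂ) (2 * b₇ - 3 * a₅)⁻¹ * q with hs
  have cz : ∀ m < 13, coeff (R := ℂ) m z = 0 := PowerSeries.X_pow_dvd_iff.mp dz
  have cs : ∀ m < 15, coeff (R := ℂ) m s = 0 := by
    intro m hm
    rcases Nat.lt_or_ge m 12 with h | h
    · rw [hs, map_sub, PowerSeries.coeff_C_mul, cz m (by omega),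
        PowerSeries.X_pow_dvd_iff.mp dq12 m h]
      ring
    · have hm' : m = 12 ∨ m = 13 ∨ m = 14 := by omega
      rcases hm' with rfl | rfl | rfl
      · rw [hs, map_sub, PowerSeries.coeff_C_mul, cz 12 (by norm_num), cq12]; ring
      · rw [hs, map_sub, PowerSeries.coeff_C_mul, cq13]
        have h13 : coeff (R := ℂ) 13 z = 1 := by simp [hz, PowerSeries.coeff_X_pow]
        rw [h13, inv_mul_cancel₀ hd]; ring
      · have h14z : coeff (R := ℂ) 14 z = 0 := by simp [hz, PowerSeries.coeff_X_pow]
        rw [hs, map_sub, PowerSeries.coeff_C_mul, h14z, cq14]; ring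
  have hsS : s ∈ adjSet ![x, y, z] 16 := by
    show s ∈ adjA ![x, y, z] 16
    have hxA : x ∈ adjA ![x, y, z] 16 := gen_mem_adjA ![x, y, z] 16 0
    have hyA : y ∈ adjA ![x, y, z] 16 := gen_mem_adjA ![x, y, z] 16 1
    have hzA : z ∈ adjA ![x, y, z] 16 := gen_mem_adjA ![x, y, z] 16 2
    rw [hs, hq]
    exact sub_mem hzA (mul_mem (C_mem_adjA _ _ _)
      (sub_mem (sub_mem (pow_mem hyA 2) (pow_mem hxA 3))
        (mul_mem (C_mem_adjA _ _ _) (mul_mem (pow_mem hxA 2) hyA))))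
  have c15s : coeff (R := ℂ) 15 s = 0 := by
    by_contra hne
    have hord : HasOrder s 15 := ⟨hne, cs⟩
    rcases ord_mem hsem hsS hord with h | h | h | h | h | h | h | h | h <;> omega
  have hdvd : (X : PowerSeries ℂ) ^ 16 ∣ s := by
    rw [PowerSeries.X_pow_dvd_iff]
    intro m hm
    rcases Nat.lt_or_ge m 15 with h | h
    · exact cs m h
    · have hm15 : m = 15 := by omega
      subst hm15; exact c15s
  obtain ⟨h, hh⟩ := hdvd
  have hzmem : z ∈ adjA ![x, y] 16 := by
    refine ⟨MvPolynomial.C (2 * b₇ - 3 * a₅)⁻¹ *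
      (MvPolynomial.X 1 ^ 2 - MvPolynomial.X 0 ^ 3 -
        MvPolynomial.C e * (MvPolynomial.X 0 ^ 2 * MvPolynomial.X 1)), h, ?_⟩
    rw [hs, hq] at hh
    simp only [map_mul, map_sub, map_pow, MvPolynomial.aeval_X, MvPolynomial.aeval_C,
      PowerSeries.algebraMap_apply, Algebra.algebraMap_self, RingHom.id_apply,
      Matrix.cons_val_zero, Matrix.cons_val_one, Matrix.head_cons]
    linear_combination hh
  apply Set.Subset.antisymm
  · refine adjSet_subset (fun i => ?_) (fun h' => tail_mem_adjA _ _ h')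
    fin_cases i
    · exact gen_mem_adjA ![x, y] 16 0
    · exact gen_mem_adjA ![x, y] 16 1
    · exact hzmem
  · refine adjSet_subset (fun i => ?_) (fun h' => tail_mem_adjA _ _ h')
    fin_cases i
    · exact gen_mem_adjA ![x, y, z] 16 0
    · exact gen_mem_adjA ![x, y, z] 16 1

end PartA
lemma poly_decomp (f g f₀ g₀ : PowerSeries ℂ) (cf cg : ℂ)
    (hf : f = C (R := ℂ) cf + f₀) (hg : g = C (R := ℂ) cg + g₀)
    (M W : Submodule ℂ (PowerSeries ℂ))
    (hMf : f₀ ∈ M) (hMg : g₀ ∈ M) (hWM : W ≤ M)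
    (hmul : ∀ u ∈ M, ∀ v ∈ M, u * v ∈ W)
    (p : MvPolynomial (Fin 2) ℂ) :
    ∃ (γ α β : ℂ) (w : PowerSeries ℂ), w ∈ W ∧
      MvPolynomial.aeval ![f, g] p = C (R := ℂ) γ + C (R := ℂ) α * f₀ + C (R := ℂ) β * g₀ + w := by
  induction p using MvPolynomial.induction_on with
  | C a =>
    refine ⟨a, 0, 0, 0, W.zero_mem, ?_⟩
    simp [MvPolynomial.aeval_C, PowerSeries.algebraMap_apply]
  | add p q hp hq =>
    obtain ⟨γ, α, β, w, hw, hpe⟩ := hp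
    obtain ⟨γ', α', β', w', hw', hqe⟩ := hq
    refine ⟨γ + γ', α + α', β + β', w + w', W.add_mem hw hw', ?_⟩
    rw [map_add, hpe, hqe]
    simp only [map_add]
    ring
  | mul_X p i hp =>
    obtain ⟨γ, α, β, w, hw, hpe⟩ := hp
    have hlinM : C (R := ℂ) α * f₀ + C (R := ℂ) β * g₀ + w ∈ M := by
      refine Submodule.add_mem _ (Submodule.add_mem _ ?_ ?_) (hWM hw)
      · rw [← PowerSeries.smul_eq_C_mul]; exact M.smul_mem _ hMf
      · rw [← PowerSeries.smul_eq_C_mul]; exact M.smul_mem _ hMg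
    fin_cases i
    · refine ⟨γ * cf, γ + α * cf, β * cf,
        (C (R := ℂ) α * f₀ + C (R := ℂ) β * g₀ + w) * f₀ + cf • w, ?_, ?_⟩
      · exact W.add_mem (hmul _ hlinM _ hMf) (W.smul_mem _ hw)
      · rw [map_mul, hpe, MvPolynomial.aeval_X]
        show _ * f = _
        rw [hf]
        simp only [PowerSeries.smul_eq_C_mul, map_mul, map_add]
        ring
    · refine ⟨γ * cg, α * cg, γ + β * cg,
        (C (R := ℂ) α * f₀ + C (R := ℂ) β * g₀ + w) * g₀ + cg • w, ?_, ?_⟩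
      · exact W.add_mem (hmul _ hlinM _ hMg) (W.smul_mem _ hw)
      · rw [map_mul, hpe, MvPolynomial.aeval_X]
        show _ * g = _
        rw [hg]
        simp only [PowerSeries.smul_eq_C_mul, map_mul, map_add]
        ring

lemma dep3 (v : Fin 3 → Fin 2 → ℂ) :
    ∃ lam : Fin 3 → ℂ, (∃ i, lam i ≠ 0) ∧ ∑ i, lam i • v i = 0 := by
  have hni : ¬ LinearIndependent ℂ v := by
    intro hli
    have h := hli.fintype_card_le_finrank
    simp [Module.finrank_pi] at h
  obtain ⟨lam, hsum, i, hine⟩ := Fintype.not_linearIndependent_iff.mp hni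
  exact ⟨lam, ⟨i, hine⟩, hsum⟩
set_option maxHeartbeats 1000000 in
lemma partB (a₅ a₇ a₉ a₁₁ a₁₅ b₇ b₉ b₁₁ b₁₅ c₁₅ : ℂ) {x y z f g : PowerSeries ℂ}
    (hx : x = X ^ 4 + C (R := ℂ) a₅ * X ^ 5 + C (R := ℂ) a₇ * X ^ 7 + C (R := ℂ) a₉ * X ^ 9 + C (R := ℂ) a₁₁ * X ^ 11 +
      C (R := ℂ) a₁₅ * X ^ 15)
    (hy : y = X ^ 6 + C (R := ℂ) b₇ * X ^ 7 + C (R := ℂ) b₉ * X ^ 9 + C (R := ℂ) b₁₁ * X ^ 11 + C (R := ℂ) b₁₅ * X ^ 15)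
    (hz : z = X ^ 13 + C (R := ℂ) c₁₅ * X ^ 15)
    (hsem : sgp (adjSet ![x, y, z] 16) =
      (AddSubmonoid.closure ({4, 6, 13} : Set ℕ) : Set ℕ))
    (heq : 2 * b₇ - 3 * a₅ = 0)
    (hS : adjSet ![x, y, z] 16 = adjSet ![f, g] 16) : False := by
  classical
  have dx := dX4 a₅ a₇ a₉ a₁₁ a₁₅ hx
  have dy := dY6 b₇ b₉ b₁₁ b₁₅ hy
  have dz := dZ13 c₁₅ hz
  have dx2 := dX2 a₅ a₇ a₉ a₁₁ a₁₅ hx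
  have dxy := dXY a₅ a₇ a₉ a₁₁ a₁₅ b₇ b₉ b₁₁ b₁₅ hx hy
  have dx3 := dX3 a₅ a₇ a₉ a₁₁ a₁₅ hx
  have dx2y := dX2Y a₅ a₇ a₉ a₁₁ a₁₅ b₇ b₉ b₁₁ b₁₅ hx hy
  have dy2 := dY2 b₇ b₉ b₁₁ b₁₅ hy
  have zx := PowerSeries.X_pow_dvd_iff.mp dx
  have zy := PowerSeries.X_pow_dvd_iff.mp dy
  have zz := PowerSeries.X_pow_dvd_iff.mp dz
  have zx2 := PowerSeries.X_pow_dvd_iff.mp dx2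
  have zxy := PowerSeries.X_pow_dvd_iff.mp dxy
  have zx3 := PowerSeries.X_pow_dvd_iff.mp dx3
  have zx2y := PowerSeries.X_pow_dvd_iff.mp dx2y
  set W : Submodule ℂ (PowerSeries ℂ) := Submodule.span ℂ
    (({x ^ 2, x * y, x ^ 3, x ^ 2 * y} : Set (PowerSeries ℂ)) ∪
      Set.range (fun h => (X : PowerSeries ℂ) ^ 16 * h)) with hWdef
  set M7 : Submodule ℂ (PowerSeries ℂ) := Submodule.span ℂ
    (({x, y, x ^ 2, x * y, x ^ 3, z, x ^ 2 * y} : Set (PowerSeries ℂ)) ∪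
      Set.range (fun h => (X : PowerSeries ℂ) ^ 16 * h)) with hM7def
  have hWM7 : W ≤ M7 := Submodule.span_mono (by
    intro u hu
    rcases hu with hu | hu
    · refine Set.mem_union_left _ ?_
      simp only [Set.mem_insert_iff, Set.mem_singleton_iff] at hu ⊢
      tauto
    · exact Set.mem_union_right _ hu)
  have hWI : ∀ {u : PowerSeries ℂ}, (X : PowerSeries ℂ) ^ 16 ∣ u → u ∈ W := by
    rintro u ⟨h, rfl⟩
    exact Submodule.subset_span (Set.mem_union_right _ ⟨h, rfl⟩)
  have hxS : x ∈ adjSet ![x, y, z] 16 := gen_mem_adjA ![x, y, z] 16 0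
  have hyS : y ∈ adjSet ![x, y, z] 16 := gen_mem_adjA ![x, y, z] 16 1
  have hzS : z ∈ adjSet ![x, y, z] 16 := gen_mem_adjA ![x, y, z] 16 2
  have hxA : x ∈ adjA ![x, y, z] 16 := hxS
  have hyA : y ∈ adjA ![x, y, z] 16 := hyS
  have hzA : z ∈ adjA ![x, y, z] 16 := hzS
  -- y*y ∈ W
  have hy2W : y * y ∈ W := by
    have hrS : y ^ 2 - x ^ 3 - C (R := ℂ) (b₇ * b₇ - 3 * (a₅ * a₅)) * (x ^ 2 * y) ∈
        adjSet ![x, y, z] 16 := by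
      show _ ∈ adjA ![x, y, z] 16
      exact sub_mem (sub_mem (pow_mem hyA 2) (pow_mem hxA 3))
        (mul_mem (C_mem_adjA _ _ _) (mul_mem (pow_mem hxA 2) hyA))
    have lowr : ∀ m < 12, coeff (R := ℂ) m
        (y ^ 2 - x ^ 3 - C (R := ℂ) (b₇ * b₇ - 3 * (a₅ * a₅)) * (x ^ 2 * y)) = 0 := by
      intro m hm
      rw [map_sub, map_sub, PowerSeries.coeff_C_mul,
        PowerSeries.X_pow_dvd_iff.mp dy2 m hm, PowerSeries.X_pow_dvd_iff.mp dx3 m hm,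
        zx2y m (by omega)]
      ring
    obtain ⟨hr, hhr⟩ := vanish_dvd hsem hrS (lowr 0 (by norm_num)) (lowr 4 (by norm_num))
      (lowr 6 (by norm_num)) (lowr 8 (by norm_num)) (lowr 10 (by norm_num))
      (by rw [map_sub, map_sub, PowerSeries.coeff_C_mul, cy2_12 b₇ b₉ b₁₁ b₁₅ hy,
            cx3_12 a₅ a₇ a₉ a₁₁ a₁₅ hx, zx2y 12 (by norm_num)]; ring)
      (by rw [map_sub, map_sub, PowerSeries.coeff_C_mul, cy2_13 b₇ b₉ b₁₁ b₁₅ hy,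
            cx3_13 a₅ a₇ a₉ a₁₁ a₁₅ hx, cx2y_13 a₅ a₇ a₉ a₁₁ a₁₅ b₇ b₉ b₁₁ b₁₅ hx hy]
          linear_combination heq)
      (by rw [map_sub, map_sub, PowerSeries.coeff_C_mul, cy2_14 b₇ b₉ b₁₁ b₁₅ hy,
            cx3_14 a₅ a₇ a₉ a₁₁ a₁₅ hx, cx2y_14 a₅ a₇ a₉ a₁₁ a₁₅ b₇ b₉ b₁₁ b₁₅ hx hy]
          ring)
    have hyy : y * y = x ^ 3 + C (R := ℂ) (b₇ * b₇ - 3 * (a₅ * a₅)) * (x ^ 2 * y) + X ^ 16 * hr := by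
      linear_combination hhr
    rw [hyy]
    refine add_mem (add_mem ?_ ?_) (hWI ⟨hr, rfl⟩)
    · exact Submodule.subset_span (Set.mem_union_left _ (by simp))
    · rw [← PowerSeries.smul_eq_C_mul]
      exact W.smul_mem _ (Submodule.subset_span (Set.mem_union_left _ (by simp)))
  -- products
  have hmul : ∀ u ∈ M7, ∀ v ∈ M7, u * v ∈ W := by
    intro u hu v hv
    refine Submodule.span_induction₂
      (p := fun u v _ _ => u * v ∈ W) ?_ ?_ ?_ ?_ ?_ ?_ ?_ hu hv
    · intro u v hu hv
      simp only [Set.mem_union, Set.mem_insert_iff, Set.mem_singleton_iff,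
        Set.mem_range] at hu hv
      rcases hu with (rfl | rfl | rfl | rfl | rfl | rfl | rfl) | ⟨h1, rfl⟩
      · rcases hv with (rfl | rfl | rfl | rfl | rfl | rfl | rfl) | ⟨h2, rfl⟩
        · refine Submodule.subset_span (Set.mem_union_left _ ?_)
          simp only [Set.mem_insert_iff, Set.mem_singleton_iff]
          exact Or.inl (by ring)
        · refine Submodule.subset_span (Set.mem_union_left _ ?_)
          simp only [Set.mem_insert_iff, Set.mem_singleton_iff]
          exact Or.inr (Or.inl (by trivial))
        · refine Submodule.subset_span (Set.mem_union_left _ ?_)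
          simp only [Set.mem_insert_iff, Set.mem_singleton_iff]
          exact Or.inr (Or.inr (Or.inl (by ring)))
        · refine Submodule.subset_span (Set.mem_union_left _ ?_)
          simp only [Set.mem_insert_iff, Set.mem_singleton_iff]
          exact Or.inr (Or.inr (Or.inr (by ring)))
        · exact hWI (hhigh dx dx3 (by norm_num))
        · exact hWI (hhigh dx dz (by norm_num))
        · exact hWI (hhigh dx dx2y (by norm_num))
        · exact hWI ((dvd_mul_right _ _).mul_left _)
      · rcases hv with (rfl | rfl | rfl | rfl | rfl | rfl | rfl) | ⟨h2, rfl⟩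
        · refine Submodule.subset_span (Set.mem_union_left _ ?_)
          simp only [Set.mem_insert_iff, Set.mem_singleton_iff]
          exact Or.inr (Or.inl (by ring))
        · exact hy2W
        · refine Submodule.subset_span (Set.mem_union_left _ ?_)
          simp only [Set.mem_insert_iff, Set.mem_singleton_iff]
          exact Or.inr (Or.inr (Or.inr (by ring)))
        · exact hWI (hhigh dy dxy (by norm_num))
        · exact hWI (hhigh dy dx3 (by norm_num))
        · exact hWI (hhigh dy dz (by norm_num))
        · exact hWI (hhigh dy dx2y (by norm_num))
        · exact hWI ((dvd_mul_right _ _).mul_left _)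
      · rcases hv with (rfl | rfl | rfl | rfl | rfl | rfl | rfl) | ⟨h2, rfl⟩
        · refine Submodule.subset_span (Set.mem_union_left _ ?_)
          simp only [Set.mem_insert_iff, Set.mem_singleton_iff]
          exact Or.inr (Or.inr (Or.inl (by ring)))
        · refine Submodule.subset_span (Set.mem_union_left _ ?_)
          simp only [Set.mem_insert_iff, Set.mem_singleton_iff]
          exact Or.inr (Or.inr (Or.inr (by trivial)))
        · exact hWI (hhigh dx2 dx2 (by norm_num))
        · exact hWI (hhigh dx2 dxy (by norm_num))
        · exact hWI (hhigh dx2 dx3 (by norm_num))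
        · exact hWI (hhigh dx2 dz (by norm_num))
        · exact hWI (hhigh dx2 dx2y (by norm_num))
        · exact hWI ((dvd_mul_right _ _).mul_left _)
      · rcases hv with (rfl | rfl | rfl | rfl | rfl | rfl | rfl) | ⟨h2, rfl⟩
        · refine Submodule.subset_span (Set.mem_union_left _ ?_)
          simp only [Set.mem_insert_iff, Set.mem_singleton_iff]
          exact Or.inr (Or.inr (Or.inr (by ring)))
        · exact hWI (hhigh dxy dy (by norm_num))
        · exact hWI (hhigh dxy dx2 (by norm_num))
        · exact hWI (hhigh dxy dxy (by norm_num))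
        · exact hWI (hhigh dxy dx3 (by norm_num))
        · exact hWI (hhigh dxy dz (by norm_num))
        · exact hWI (hhigh dxy dx2y (by norm_num))
        · exact hWI ((dvd_mul_right _ _).mul_left _)
      · rcases hv with (rfl | rfl | rfl | rfl | rfl | rfl | rfl) | ⟨h2, rfl⟩
        · exact hWI (hhigh dx3 dx (by norm_num))
        · exact hWI (hhigh dx3 dy (by norm_num))
        · exact hWI (hhigh dx3 dx2 (by norm_num))
        · exact hWI (hhigh dx3 dxy (by norm_num))
        · exact hWI (hhigh dx3 dx3 (by norm_num))
        · exact hWI (hhigh dx3 dz (by norm_num))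
        · exact hWI (hhigh dx3 dx2y (by norm_num))
        · exact hWI ((dvd_mul_right _ _).mul_left _)
      · rcases hv with (rfl | rfl | rfl | rfl | rfl | rfl | rfl) | ⟨h2, rfl⟩
        · exact hWI (hhigh dz dx (by norm_num))
        · exact hWI (hhigh dz dy (by norm_num))
        · exact hWI (hhigh dz dx2 (by norm_num))
        · exact hWI (hhigh dz dxy (by norm_num))
        · exact hWI (hhigh dz dx3 (by norm_num))
        · exact hWI (hhigh dz dz (by norm_num))
        · exact hWI (hhigh dz dx2y (by norm_num))
        · exact hWI ((dvd_mul_right _ _).mul_left _)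
      · rcases hv with (rfl | rfl | rfl | rfl | rfl | rfl | rfl) | ⟨h2, rfl⟩
        · exact hWI (hhigh dx2y dx (by norm_num))
        · exact hWI (hhigh dx2y dy (by norm_num))
        · exact hWI (hhigh dx2y dx2 (by norm_num))
        · exact hWI (hhigh dx2y dxy (by norm_num))
        · exact hWI (hhigh dx2y dx3 (by norm_num))
        · exact hWI (hhigh dx2y dz (by norm_num))
        · exact hWI (hhigh dx2y dx2y (by norm_num))
        · exact hWI ((dvd_mul_right _ _).mul_left _)
      · exact hWI ((dvd_mul_right _ _).mul_right _)
    · intro v _; rw [zero_mul]; exact W.zero_mem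
    · intro u _; rw [mul_zero]; exact W.zero_mem
    · intro u v w _ _ _ h1 h2; rw [add_mul]; exact W.add_mem h1 h2
    · intro u v w _ _ _ h1 h2; rw [mul_add]; exact W.add_mem h1 h2
    · intro r u v _ _ h1; rw [smul_mul_assoc]; exact W.smul_mem _ h1
    · intro r u v _ _ h1; rw [mul_smul_comm]; exact W.smul_mem _ h1
  -- toM7
  have toM7 : ∀ s, s ∈ adjSet ![x, y, z] 16 → coeff (R := ℂ) 0 s = 0 → s ∈ M7 := by
    intro s hs h0
    obtain ⟨c1, c2, c3, c4, c5, c6, c7, h, hse⟩ :=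
      decompose a₅ a₇ a₉ a₁₁ a₁₅ b₇ b₉ b₁₁ b₁₅ c₁₅ hx hy hz hsem hs h0
    have mem7 : ∀ u ∈ (({x, y, x ^ 2, x * y, x ^ 3, z, x ^ 2 * y} : Set (PowerSeries ℂ)) ∪
        Set.range (fun h => (X : PowerSeries ℂ) ^ 16 * h)), u ∈ M7 :=
      fun u hu => Submodule.subset_span hu
    rw [hse]
    refine Submodule.add_mem _ ?_ (mem7 _ (Set.mem_union_right _ ⟨h, rfl⟩))
    refine Submodule.add_mem _ ?_
      (M7.smul_mem _ (mem7 _ (Set.mem_union_left _ (by simp))))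
    refine Submodule.add_mem _ ?_
      (M7.smul_mem _ (mem7 _ (Set.mem_union_left _ (by simp))))
    refine Submodule.add_mem _ ?_
      (M7.smul_mem _ (mem7 _ (Set.mem_union_left _ (by simp))))
    refine Submodule.add_mem _ ?_
      (M7.smul_mem _ (mem7 _ (Set.mem_union_left _ (by simp))))
    refine Submodule.add_mem _ ?_
      (M7.smul_mem _ (mem7 _ (Set.mem_union_left _ (by simp))))
    refine Submodule.add_mem _ ?_
      (M7.smul_mem _ (mem7 _ (Set.mem_union_left _ (by simp))))
    exact M7.smul_mem _ (mem7 _ (Set.mem_union_left _ (by simp)))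
  -- f₀, g₀
  have hfS : f ∈ adjSet ![x, y, z] 16 := by rw [hS]; exact gen_mem_adjA ![f, g] 16 0
  have hgS : g ∈ adjSet ![x, y, z] 16 := by rw [hS]; exact gen_mem_adjA ![f, g] 16 1
  set f₀ := f - C (R := ℂ) (coeff (R := ℂ) 0 f) with hf0def
  set g₀ := g - C (R := ℂ) (coeff (R := ℂ) 0 g) with hg0def
  have hff : f = C (R := ℂ) (coeff (R := ℂ) 0 f) + f₀ := by rw [hf0def]; ring
  have hgg : g = C (R := ℂ) (coeff (R := ℂ) 0 g) + g₀ := by rw [hg0def]; ring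
  have hf0S : f₀ ∈ adjSet ![x, y, z] 16 := by
    show f₀ ∈ adjA ![x, y, z] 16
    exact sub_mem hfS (C_mem_adjA _ _ _)
  have hg0S : g₀ ∈ adjSet ![x, y, z] 16 := by
    show g₀ ∈ adjA ![x, y, z] 16
    exact sub_mem hgS (C_mem_adjA _ _ _)
  have hcf0 : coeff (R := ℂ) 0 f₀ = 0 := by
    rw [hf0def, map_sub, PowerSeries.coeff_zero_C]; ring
  have hcg0 : coeff (R := ℂ) 0 g₀ = 0 := by
    rw [hg0def, map_sub, PowerSeries.coeff_zero_C]; ring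
  have hf0M := toM7 f₀ hf0S hcf0
  have hg0M := toM7 g₀ hg0S hcg0
  -- coefficients vanish on W
  have hWker : ∀ m : ℕ, m < 8 → ∀ w ∈ W, coeff (R := ℂ) m w = 0 := by
    intro m hm w hw
    have hle : W ≤ LinearMap.ker (PowerSeries.coeff (R := ℂ) m) := by
      rw [hWdef, Submodule.span_le]
      rintro u (hu | ⟨h, rfl⟩)
      · simp only [Set.mem_insert_iff, Set.mem_singleton_iff] at hu
        rcases hu with rfl | rfl | rfl | rfl
        · exact LinearMap.mem_ker.mpr (zx2 m (by omega))
        · exact LinearMap.mem_ker.mpr (zxy m (by omega))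
        · exact LinearMap.mem_ker.mpr (zx3 m (by omega))
        · exact LinearMap.mem_ker.mpr (zx2y m (by omega))
      · exact LinearMap.mem_ker.mpr (coeff_X16_mul m (by omega) h)
    exact LinearMap.mem_ker.mp (hle hw)
  -- decompose x, y, z over f₀, g₀ mod W
  have hdecomp : ∀ u, u ∈ adjSet ![x, y, z] 16 → coeff (R := ℂ) 0 u = 0 →
      ∃ (α β : ℂ) (w : PowerSeries ℂ), w ∈ W ∧ u = C (R := ℂ) α * f₀ + C (R := ℂ) β * g₀ + w := by
    intro u huS h0u
    have huFG : u ∈ adjSet ![f, g] 16 := by rw [← hS]; exact huS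
    obtain ⟨p, h, hue⟩ := huFG
    obtain ⟨γ, α, β, w, hw, hpe⟩ :=
      poly_decomp f g f₀ g₀ _ _ hff hgg M7 W hf0M hg0M hWM7 hmul p
    have hwW : w + X ^ 16 * h ∈ W := W.add_mem hw (hWI (dvd_mul_right _ _))
    have hue2 : u = C (R := ℂ) γ + C (R := ℂ) α * f₀ + C (R := ℂ) β * g₀ + (w + X ^ 16 * h) := by
      rw [hue, hpe]; ring
    have hγ : γ = 0 := by
      have h1 := congrArg (coeff (R := ℂ) 0) hue2
      rw [h0u] at h1
      simp only [map_add, PowerSeries.coeff_C_mul, PowerSeries.coeff_zero_C, hcf0, hcg0,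
        hWker 0 (by norm_num) _ hwW] at h1
      linear_combination -h1
    refine ⟨α, β, w + X ^ 16 * h, hwW, ?_⟩
    rw [hue2, hγ]
    simp
  have h0x : coeff (R := ℂ) 0 x = 0 := zx 0 (by norm_num)
  have h0y : coeff (R := ℂ) 0 y = 0 := zy 0 (by norm_num)
  have h0z : coeff (R := ℂ) 0 z = 0 := zz 0 (by norm_num)
  obtain ⟨α₁, β₁, w₁, hw₁, hxe⟩ := hdecomp x hxS h0x
  obtain ⟨α₂, β₂, w₂, hw₂, hye⟩ := hdecomp y hyS h0y
  obtain ⟨α₃, β₃, w₃, hw₃, hze⟩ := hdecomp z hzS h0z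
  obtain ⟨lam, ⟨i, hine⟩, hsum⟩ := dep3 ![![α₁, β₁], ![α₂, β₂], ![α₃, β₃]]
  have hA : lam 0 * α₁ + lam 1 * α₂ + lam 2 * α₃ = 0 := by
    have h1 := congrFun hsum 0
    simpa [Fin.sum_univ_three] using h1
  have hB : lam 0 * β₁ + lam 1 * β₂ + lam 2 * β₃ = 0 := by
    have h1 := congrFun hsum 1
    simpa [Fin.sum_univ_three] using h1
  have key : lam 0 • x + lam 1 • y + lam 2 • z =
      C (R := ℂ) (lam 0 * α₁ + lam 1 * α₂ + lam 2 * α₃) * f₀ +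
      C (R := ℂ) (lam 0 * β₁ + lam 1 * β₂ + lam 2 * β₃) * g₀ +
      (lam 0 • w₁ + lam 1 • w₂ + lam 2 • w₃) := by
    rw [hxe, hye, hze]
    simp only [PowerSeries.smul_eq_C_mul, map_add, map_mul]
    ring
  have hmemW : lam 0 • x + lam 1 • y + lam 2 • z ∈ W := by
    rw [key, hA, hB]
    simp only [map_zero, zero_mul, zero_add]
    exact W.add_mem (W.add_mem (W.smul_mem _ hw₁) (W.smul_mem _ hw₂)) (W.smul_mem _ hw₃)
  have c6x : coeff (R := ℂ) 6 x = 0 := by simp [hx, PowerSeries.coeff_X_pow]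
  have c4x : coeff (R := ℂ) 4 x = 1 := by simp [hx, PowerSeries.coeff_X_pow]
  have c6y : coeff (R := ℂ) 6 y = 1 := by simp [hy, PowerSeries.coeff_X_pow]
  have hl0 : lam 0 = 0 := by
    have h1 := hWker 4 (by norm_num) _ hmemW
    simp only [map_add, PowerSeries.coeff_smul, smul_eq_mul, c4x,
      zy 4 (by norm_num), zz 4 (by norm_num)] at h1
    linear_combination h1
  have hl1 : lam 1 = 0 := by
    have h1 := hWker 6 (by norm_num) _ hmemW
    simp only [map_add, PowerSeries.coeff_smul, smul_eq_mul, c6x, c6y,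
      zz 6 (by norm_num)] at h1
    linear_combination h1
  have hz2W : lam 2 • z ∈ W := by
    have h1 := hmemW
    rw [hl0, hl1] at h1
    simpa using h1
  -- the functional killing order-13
  have hWφ : ∀ u ∈ W, coeff (R := ℂ) 13 u - (3 * a₅) * coeff (R := ℂ) 12 u -
      (b₉ + a₇ - 3 * a₅ * (a₅ * b₇)) * coeff (R := ℂ) 10 u -
      (2 * a₉ - 3 * a₅ * (2 * a₅ * a₇) - (b₉ + a₇ - 3 * a₅ * (a₅ * b₇)) * (a₅ * a₅)) *
        coeff (R := ℂ) 8 u = 0 := by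
    intro u hu
    rw [hWdef] at hu
    induction hu using Submodule.span_induction with
    | mem u hu =>
      rcases hu with hu | ⟨h, rfl⟩
      · simp only [Set.mem_insert_iff, Set.mem_singleton_iff] at hu
        rcases hu with rfl | rfl | rfl | rfl
        · rw [cx2_13 a₅ a₇ a₉ a₁₁ a₁₅ hx, cx2_12 a₅ a₇ a₉ a₁₁ a₁₅ hx,
            cx2_10 a₅ a₇ a₉ a₁₁ a₁₅ hx, cx2_8 a₅ a₇ a₉ a₁₁ a₁₅ hx]
          ring
        · rw [cxy_13 a₅ a₇ a₉ a₁₁ a₁₅ b₇ b₉ b₁₁ b₁₅ hx hy,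
            cxy_12 a₅ a₇ a₉ a₁₁ a₁₅ b₇ b₉ b₁₁ b₁₅ hx hy,
            cxy_10 a₅ a₇ a₉ a₁₁ a₁₅ b₇ b₉ b₁₁ b₁₅ hx hy, zxy 8 (by norm_num)]
          ring
        · rw [cx3_13 a₅ a₇ a₉ a₁₁ a₁₅ hx, cx3_12 a₅ a₇ a₉ a₁₁ a₁₅ hx,
            zx3 10 (by norm_num), zx3 8 (by norm_num)]
          ring
        · rw [cx2y_13 a₅ a₇ a₉ a₁₁ a₁₅ b₇ b₉ b₁₁ b₁₅ hx hy, zx2y 12 (by norm_num),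
            zx2y 10 (by norm_num), zx2y 8 (by norm_num)]
          ring
      · rw [coeff_X16_mul 13 (by norm_num), coeff_X16_mul 12 (by norm_num),
          coeff_X16_mul 10 (by norm_num), coeff_X16_mul 8 (by norm_num)]
        ring
    | zero => simp
    | add u v _ _ hpu hpv =>
      simp only [map_add]
      linear_combination hpu + hpv
    | smul c u _ hpu =>
      simp only [PowerSeries.coeff_smul, smul_eq_mul]
      linear_combination c * hpu
  have hl2 : lam 2 = 0 := by
    have h1 := hWφ _ hz2W
    have c13z : coeff (R := ℂ) 13 z = 1 := by simp [hz, PowerSeries.coeff_X_pow]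
    simp only [PowerSeries.coeff_smul, smul_eq_mul, c13z, zz 12 (by norm_num),
      zz 10 (by norm_num), zz 8 (by norm_num)] at h1
    linear_combination h1
  fin_cases i
  · exact hine hl0
  · exact hine hl1
  · exact hine hl2

end Stmt18Aux

open PowerSeries in
/-- for `Γ = ⟨4,6,13⟩` and a normal-form triple `(x,y,z)` generating
`R = ⟨x,y,z⟩ + t¹⁶·ℂ[[t]]` with semigroup `Γ`, the following are equivalent:
(i) `R = ⟨f,g⟩ + t¹⁶·ℂ[[t]]` for some `f,g`; (ii) `R = ⟨x,y⟩ + t¹⁶·ℂ[[t]]`;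
(iii) `y² − x³` has order 13; (iv) `2b₇ − 3a₅ ≠ 0`. -/
theorem stmt18 (a₅ a₇ a₉ a₁₁ a₁₅ b₇ b₉ b₁₁ b₁₅ c₁₅ : ℂ)
    (x y z : PowerSeries ℂ)
    (hx : x = X ^ 4 + C (R := ℂ) a₅ * X ^ 5 + C (R := ℂ) a₇ * X ^ 7 + C (R := ℂ) a₉ * X ^ 9 +
      C (R := ℂ) a₁₁ * X ^ 11 + C (R := ℂ) a₁₅ * X ^ 15)
    (hy : y = X ^ 6 + C (R := ℂ) b₇ * X ^ 7 + C (R := ℂ) b₉ * X ^ 9 + C (R := ℂ) b₁₁ * X ^ 11 +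
      C (R := ℂ) b₁₅ * X ^ 15)
    (hz : z = X ^ 13 + C (R := ℂ) c₁₅ * X ^ 15)
    (hsem : sgp (adjSet ![x, y, z] 16) =
      (AddSubmonoid.closure ({4, 6, 13} : Set ℕ) : Set ℕ)) :
    ((∃ f g : PowerSeries ℂ, adjSet ![x, y, z] 16 = adjSet ![f, g] 16) ↔
      adjSet ![x, y, z] 16 = adjSet ![x, y] 16) ∧
    (adjSet ![x, y, z] 16 = adjSet ![x, y] 16 ↔ HasOrder (y ^ 2 - x ^ 3) 13) ∧
    (HasOrder (y ^ 2 - x ^ 3) 13 ↔ 2 * b₇ - 3 * a₅ ≠ 0) := by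
  refine ⟨?_, ?_, Stmt18Aux.ord13_iff a₅ a₇ a₉ a₁₁ a₁₅ b₇ b₉ b₁₁ b₁₅ hx hy⟩
  · constructor
    · rintro ⟨f, g, hfg⟩
      by_cases hd : 2 * b₇ - 3 * a₅ = 0
      · exact (Stmt18Aux.partB a₅ a₇ a₉ a₁₁ a₁₅ b₇ b₉ b₁₁ b₁₅ c₁₅ hx hy hz hsem hd hfg).elim
      · exact Stmt18Aux.partA a₅ a₇ a₉ a₁₁ a₁₅ b₇ b₉ b₁₁ b₁₅ c₁₅ hx hy hz hsem hd
    · intro h2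
      exact ⟨x, y, h2⟩
  · constructor
    · intro h2
      refine (Stmt18Aux.ord13_iff a₅ a₇ a₉ a₁₁ a₁₅ b₇ b₉ b₁₁ b₁₅ hx hy).mpr ?_
      by_cases hd : 2 * b₇ - 3 * a₅ = 0
      · exact (Stmt18Aux.partB a₅ a₇ a₉ a₁₁ a₁₅ b₇ b₉ b₁₁ b₁₅ c₁₅ hx hy hz hsem hd h2).elim
      · exact hd
    · intro h3
      exact Stmt18Aux.partA a₅ a₇ a₉ a₁₁ a₁₅ b₇ b₉ b₁₁ b₁₅ c₁₅ hx hy hz hsem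
        ((Stmt18Aux.ord13_iff a₅ a₇ a₉ a₁₁ a₁₅ b₇ b₉ b₁₁ b₁₅ hx hy).mp h3)
end
end
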